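/- arXiv:2311.05327 — 5 statements merged into one kernel-verified Lean document; each statement's English description precedes it below -/
import Mathlib

section
/- Let n be a positive integer and let H be a finite simple graph on n vertices with edge set E, triangle set T, and let E_0 be the set of edges of H not contained in any triangle. Then |E| - |T| - |E_0|/2 ≤ ⌊(n+1)²/8⌋. -/
/-- The set of (vertex sets of) triangles of `G`: 3-element sets of pairwise adjacent vertices. -/
def triangleFinset {V : Type*} [Fintype V] [DecidableEq V] (G : SimpleGraph V)
    [DecidableRel G.Adj] : Finset (Finset V) :=
  Finset.univ.filter fun s => s.card = 3 ∧ ∀ u ∈ s, ∀ v ∈ s, u ≠ v → G.Adj u v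

set_option linter.unusedSectionVars false

namespace Stmt6Aux

open Finset

attribute [local instance] Classical.propDecidable

variable {V : Type*} [Fintype V] [DecidableEq V] (G : SimpleGraph V) [DecidableRel G.Adj]

/-- unordered pair as a `Finset`. -/
noncomputable def s2F : Sym2 V → Finset V :=
  Sym2.lift ⟨fun x y => {x, y}, fun x y => Finset.pair_comm x y⟩

lemma mem_s2F {z : V} {e : Sym2 V} : z ∈ s2F e ↔ z ∈ e := by
  induction e using Sym2.ind with
  | _ x y => simp [s2F, Sym2.mem_iff]

lemma card_s2F {e : Sym2 V} (h : ¬ e.IsDiag) : (s2F e).card = 2 := by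
  induction e using Sym2.ind with
  | _ x y =>
    rw [Sym2.mk_isDiag_iff] at h
    simp [s2F, Finset.card_insert_of_notMem, h]

lemma s2F_inj {e e' : Sym2 V} (h : s2F e = s2F e') : e = e' := by
  induction e using Sym2.ind with
  | _ x y =>
    induction e' using Sym2.ind with
    | _ z w =>
      simp only [s2F, Sym2.lift_mk] at h
      have hx : x ∈ ({z, w} : Finset V) := h ▸ (by simp)
      have hy : y ∈ ({z, w} : Finset V) := h ▸ (by simp)
      have hz : z ∈ ({x, y} : Finset V) := h ▸ (by simp)
      have hw : w ∈ ({x, y} : Finset V) := h ▸ (by simp)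
      simp only [Finset.mem_insert, Finset.mem_singleton] at hx hy hz hw
      rw [Sym2.eq_iff]
      rcases hx with rfl | rfl <;> rcases hy with rfl | rfl <;> tauto

variable (v : V) (E0 : Finset (Sym2 V))

/-- edges inside the neighborhood of `v`. -/
noncomputable def mAs : Finset (Sym2 V) :=
  G.edgeFinset.filter fun e => ∀ x ∈ e, x ∈ G.neighborFinset v

/-- edges avoiding the neighborhood of `v`. -/
noncomputable def eBs : Finset (Sym2 V) :=
  G.edgeFinset.filter fun e => ∀ x ∈ e, x ∉ G.neighborFinset v

/-- crossing edges. -/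
noncomputable def ecs : Finset (Sym2 V) :=
  G.edgeFinset.filter fun e =>
    ¬ (∀ x ∈ e, x ∈ G.neighborFinset v) ∧ ¬ (∀ x ∈ e, x ∉ G.neighborFinset v)

/-- crossing `E0`-edges. -/
noncomputable def c0s : Finset (Sym2 V) :=
  G.edgeFinset.filter fun e =>
    (¬ (∀ x ∈ e, x ∈ G.neighborFinset v) ∧ ¬ (∀ x ∈ e, x ∉ G.neighborFinset v)) ∧ e ∈ E0

/-- `E1`-edges at `v`. -/
noncomputable def c1vs : Finset (Sym2 V) :=
  G.edgeFinset.filter fun e => v ∈ e ∧ e ∉ E0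

/-- crossing `E1`-edges avoiding `v`. -/
noncomputable def s0s : Finset (Sym2 V) :=
  G.edgeFinset.filter fun e =>
    e ∉ E0 ∧ (¬ (∀ x ∈ e, x ∈ G.neighborFinset v) ∧ ¬ (∀ x ∈ e, x ∉ G.neighborFinset v)) ∧
      v ∉ e

/-- incidences: an internal edge together with an opposite-side common neighbor. -/
noncomputable def inc : Finset (Sym2 V × V) :=
  (G.edgeFinset ×ˢ (univ : Finset V)).filter fun p =>
    ((∀ x ∈ p.1, x ∈ G.neighborFinset v) ∧ p.2 ∉ G.neighborFinset v ∨
      (∀ x ∈ p.1, x ∉ G.neighborFinset v) ∧ p.2 ∈ G.neighborFinset v) ∧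
    ∀ x ∈ p.1, G.Adj x p.2

lemma sym2_exists_mem (e : Sym2 V) : ∃ x, x ∈ e := by
  induction e using Sym2.ind with
  | _ x y => exact ⟨x, by simp⟩

lemma adj_of_edge {e : Sym2 V} {x y : V} (he : e ∈ G.edgeFinset) (hx : x ∈ e) (hy : y ∈ e)
    (hxy : x ≠ y) : G.Adj x y := by
  induction e using Sym2.ind with
  | _ a b =>
    rw [Sym2.mem_iff] at hx hy
    have hab : G.Adj a b := by simpa using he
    rcases hx with rfl | rfl <;> rcases hy with rfl | rfl
    · exact absurd rfl hxy
    · exact hab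
    · exact hab.symm
    · exact absurd rfl hxy

lemma edge_partition :
    G.edgeFinset.card = (mAs G v).card + (ecs G v).card + (eBs G v).card := by
  have h1 : ((G.edgeFinset.filter fun e => ∀ x ∈ e, x ∈ G.neighborFinset v).card : ℕ) +
      (G.edgeFinset.filter fun e => ¬ ∀ x ∈ e, x ∈ G.neighborFinset v).card
        = G.edgeFinset.card :=
    Finset.card_filter_add_card_filter_not _
  have h2 : (((G.edgeFinset.filter fun e => ¬ ∀ x ∈ e, x ∈ G.neighborFinset v).filter
        fun e => ∀ x ∈ e, x ∉ G.neighborFinset v).card : ℕ) +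
      ((G.edgeFinset.filter fun e => ¬ ∀ x ∈ e, x ∈ G.neighborFinset v).filter
        fun e => ¬ ∀ x ∈ e, x ∉ G.neighborFinset v).card
        = (G.edgeFinset.filter fun e => ¬ ∀ x ∈ e, x ∈ G.neighborFinset v).card :=
    Finset.card_filter_add_card_filter_not _
  have e1 : (G.edgeFinset.filter fun e => ¬ ∀ x ∈ e, x ∈ G.neighborFinset v).filter
      (fun e => ∀ x ∈ e, x ∉ G.neighborFinset v) = eBs G v := by
    rw [Finset.filter_filter]
    apply Finset.filter_congr
    intro e _
    constructor
    · exact fun h => h.2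
    · intro h
      obtain ⟨x, hx⟩ := sym2_exists_mem e
      exact ⟨fun hall => h x hx (hall x hx), h⟩
  have e2 : (G.edgeFinset.filter fun e => ¬ ∀ x ∈ e, x ∈ G.neighborFinset v).filter
      (fun e => ¬ ∀ x ∈ e, x ∉ G.neighborFinset v) = ecs G v := by
    rw [Finset.filter_filter]; rfl
  rw [e1, e2] at h2
  unfold mAs
  omega

lemma vedge_cross {e : Sym2 V} (he : e ∈ G.edgeFinset) (hv : v ∈ e) :
    ¬ (∀ x ∈ e, x ∈ G.neighborFinset v) ∧ ¬ (∀ x ∈ e, x ∉ G.neighborFinset v) := by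
  obtain ⟨u, rfl⟩ := Sym2.mem_iff_exists.mp hv
  have hadj : G.Adj v u := by simpa using he
  constructor
  · intro hall
    have := hall v (by simp)
    simp at this
  · intro hall
    have := hall u (by simp)
    rw [SimpleGraph.mem_neighborFinset] at this
    exact this hadj

lemma ecs_split (hE0 : ∀ e, e ∈ E0 ↔ e ∈ G.edgeFinset ∧ ∀ w : V, ¬ ∀ x ∈ e, G.Adj x w) :
    (ecs G v).card = (c1vs G v E0).card + (s0s G v E0).card + (c0s G v E0).card := by
  set P := fun e : Sym2 V =>
    ¬ (∀ x ∈ e, x ∈ G.neighborFinset v) ∧ ¬ (∀ x ∈ e, x ∉ G.neighborFinset v) with hP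
  have h1 : (((ecs G v).filter fun e => e ∈ E0).card : ℕ) +
      ((ecs G v).filter fun e => e ∉ E0).card = (ecs G v).card :=
    Finset.card_filter_add_card_filter_not _
  have h2 : ((((ecs G v).filter fun e => e ∉ E0).filter fun e => v ∈ e).card : ℕ) +
      (((ecs G v).filter fun e => e ∉ E0).filter fun e => v ∉ e).card
        = ((ecs G v).filter fun e => e ∉ E0).card :=
    Finset.card_filter_add_card_filter_not _
  have e0' : (ecs G v).filter (fun e => e ∈ E0) = c0s G v E0 := by
    unfold ecs c0s; rw [Finset.filter_filter]
  have e1 : ((ecs G v).filter fun e => e ∉ E0).filter (fun e => v ∉ e) = s0s G v E0 := by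
    unfold ecs s0s; rw [Finset.filter_filter, Finset.filter_filter]
    apply Finset.filter_congr
    intro e _; tauto
  have e2 : ((ecs G v).filter fun e => e ∉ E0).filter (fun e => v ∈ e) = c1vs G v E0 := by
    unfold ecs c1vs; rw [Finset.filter_filter, Finset.filter_filter]
    ext e
    simp only [Finset.mem_filter]
    have := fun (he : e ∈ G.edgeFinset) (hv : v ∈ e) => vedge_cross G v he hv
    tauto
  rw [e0'] at h1; rw [e1, e2] at h2
  omega

lemma c1vs_subset_incidence : c1vs G v E0 ⊆ G.incidenceFinset v := by
  intro e he
  simp only [c1vs, Finset.mem_filter] at he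
  rw [SimpleGraph.mem_incidenceFinset]
  exact ⟨SimpleGraph.mem_edgeFinset.mp he.1, he.2.1⟩

lemma sum_split (f : Sym2 V → ℕ) :
    ∑ e ∈ G.edgeFinset, f e =
      ∑ e ∈ mAs G v, f e + ∑ e ∈ ecs G v, f e + ∑ e ∈ eBs G v, f e := by
  classical
  have h1 : ∑ e ∈ G.edgeFinset, f e =
      (∑ e ∈ G.edgeFinset.filter fun e => ∀ x ∈ e, x ∈ G.neighborFinset v, f e) +
      ∑ e ∈ G.edgeFinset.filter fun e => ¬ ∀ x ∈ e, x ∈ G.neighborFinset v, f e :=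
    (Finset.sum_filter_add_sum_filter_not _ _ _).symm
  have h2 : ∑ e ∈ G.edgeFinset.filter fun e => ¬ ∀ x ∈ e, x ∈ G.neighborFinset v, f e =
      (∑ e ∈ (G.edgeFinset.filter fun e => ¬ ∀ x ∈ e, x ∈ G.neighborFinset v).filter
        fun e => ∀ x ∈ e, x ∉ G.neighborFinset v, f e) +
      ∑ e ∈ (G.edgeFinset.filter fun e => ¬ ∀ x ∈ e, x ∈ G.neighborFinset v).filter
        fun e => ¬ ∀ x ∈ e, x ∉ G.neighborFinset v, f e :=
    (Finset.sum_filter_add_sum_filter_not _ _ _).symm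
  have e1 : (G.edgeFinset.filter fun e => ¬ ∀ x ∈ e, x ∈ G.neighborFinset v).filter
      (fun e => ∀ x ∈ e, x ∉ G.neighborFinset v) = eBs G v := by
    rw [Finset.filter_filter]
    apply Finset.filter_congr
    intro e _
    constructor
    · exact fun h => h.2
    · intro h
      obtain ⟨x, hx⟩ := sym2_exists_mem e
      exact ⟨fun hall => h x hx (hall x hx), h⟩
  have e2 : (G.edgeFinset.filter fun e => ¬ ∀ x ∈ e, x ∈ G.neighborFinset v).filter
      (fun e => ¬ ∀ x ∈ e, x ∉ G.neighborFinset v) = ecs G v := by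
    rw [Finset.filter_filter]; rfl
  rw [e1, e2] at h2
  rw [h1, h2]
  unfold mAs
  ring

lemma sum_deg_eq :
    ∑ b ∈ (G.neighborFinset v)ᶜ, G.degree b = (ecs G v).card + 2 * (eBs G v).card := by
  classical
  set A := G.neighborFinset v with hA
  set P := ((Aᶜ : Finset V) ×ˢ (univ : Finset V)).filter fun p => G.Adj p.1 p.2 with hPdef
  -- step 1 : card P = sum of degrees
  have step1 : P.card = ∑ b ∈ (Aᶜ : Finset V), G.degree b := by
    rw [Finset.card_eq_sum_card_fiberwise (f := Prod.fst) (t := (Aᶜ : Finset V))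
      (fun p hp => (Finset.mem_product.mp (Finset.mem_filter.mp hp).1).1)]
    apply Finset.sum_congr rfl
    intro b hb
    have : P.filter (fun p => p.1 = b) = {b} ×ˢ G.neighborFinset b := by
      ext ⟨p1, p2⟩
      simp only [hPdef, Finset.mem_filter, Finset.mem_product, Finset.mem_univ,
        Finset.mem_singleton, SimpleGraph.mem_neighborFinset, true_and, and_true]
      constructor
      · rintro ⟨⟨-, hadj⟩, rfl⟩; exact ⟨rfl, hadj⟩
      · rintro ⟨rfl, hadj⟩; exact ⟨⟨hb, hadj⟩, rfl⟩
    rw [this, Finset.card_product, Finset.card_singleton, one_mul,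
      SimpleGraph.card_neighborFinset_eq_degree]
  -- step 2 : card P = sum over edges of fibers
  have step2 : P.card = ∑ e ∈ G.edgeFinset, (P.filter fun p => s(p.1, p.2) = e).card :=
    Finset.card_eq_sum_card_fiberwise (f := fun p : V × V => s(p.1, p.2)) (s := P)
      (t := G.edgeFinset) (fun p hp => by
        have hadj : G.Adj p.1 p.2 := (Finset.mem_filter.mp hp).2
        simpa using hadj)
  -- step 3 : fiber over an edge
  have step3 : ∀ e ∈ G.edgeFinset,
      (P.filter fun p => s(p.1, p.2) = e).card = ((s2F e).filter fun z => z ∉ A).card := by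
    intro e he
    induction e using Sym2.ind with
    | _ x y =>
      have hxy : x ≠ y := by
        have := G.not_isDiag_of_mem_edgeFinset he
        rwa [Sym2.mk_isDiag_iff] at this
      have hadj : G.Adj x y := by simpa using he
      apply Finset.card_bij (i := fun p _ => p.1)
      · rintro ⟨p1, p2⟩ hp
        simp only [hPdef, Finset.mem_filter, Finset.mem_product, Finset.mem_univ,
          and_true] at hp
        obtain ⟨⟨h1, -⟩, heq⟩ := hp
        simp only [Finset.mem_filter, mem_s2F]
        rw [Sym2.eq_iff] at heq
        constructor
        · rcases heq with ⟨rfl, -⟩ | ⟨rfl, -⟩ <;> simp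
        · simpa using h1
      · rintro ⟨p1, p2⟩ hp ⟨q1, q2⟩ hq h
        simp only at h
        subst h
        simp only [hPdef, Finset.mem_filter, Finset.mem_product, Finset.mem_univ,
          and_true] at hp hq
        obtain ⟨-, heqp⟩ := hp
        obtain ⟨-, heqq⟩ := hq
        rw [Sym2.eq_iff] at heqp heqq
        have : p2 = q2 := by
          rcases heqp with ⟨h1, h2⟩ | ⟨h1, h2⟩ <;> rcases heqq with ⟨h3, h4⟩ | ⟨h3, h4⟩ <;>
            first
            | (exact h2.trans h4.symm)
            | (exact absurd (h1.symm.trans h3) hxy)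
            | (exact absurd (h3.symm.trans h1) hxy)
        rw [this]
      · intro z hz
        simp only [Finset.mem_filter, mem_s2F, Sym2.mem_iff] at hz
        obtain ⟨hz1, hz2⟩ := hz
        rcases hz1 with rfl | rfl
        · refine ⟨(z, y), Finset.mem_filter.mpr ⟨Finset.mem_filter.mpr
            ⟨Finset.mem_product.mpr ⟨by simpa using hz2, Finset.mem_univ _⟩, hadj⟩, rfl⟩, rfl⟩
        · refine ⟨(z, x), Finset.mem_filter.mpr ⟨Finset.mem_filter.mpr
            ⟨Finset.mem_product.mpr ⟨by simpa using hz2, Finset.mem_univ _⟩, hadj.symm⟩,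
              Sym2.eq_swap⟩, rfl⟩
  -- combine: sum over edges of (endpoints outside A)
  have step4 : ∑ e ∈ G.edgeFinset, ((s2F e).filter fun z => z ∉ A).card =
      (ecs G v).card + 2 * (eBs G v).card := by
    rw [sum_split G v]
    have hmA : ∑ e ∈ mAs G v, ((s2F e).filter fun z => z ∉ A).card = 0 := by
      apply Finset.sum_eq_zero
      intro e he
      simp only [mAs, Finset.mem_filter] at he
      rw [Finset.card_eq_zero, Finset.filter_eq_empty_iff]
      intro z hz
      simp only [not_not]
      exact he.2 z (mem_s2F.mp hz)
    have hec : ∀ e ∈ ecs G v, ((s2F e).filter fun z => z ∉ A).card = 1 := by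
      intro e he
      simp only [ecs, Finset.mem_filter] at he
      obtain ⟨hee, hnin, hnout⟩ := he
      induction e using Sym2.ind with
      | _ x y =>
        have hxy : x ≠ y := by
          have := G.not_isDiag_of_mem_edgeFinset hee
          rwa [Sym2.mk_isDiag_iff] at this
        push_neg at hnin
        obtain ⟨z, hz, hzo⟩ := hnin
        have hin : ∃ w ∈ s(x, y), w ∈ A := by
          by_contra hcon
          push_neg at hcon
          exact hnout hcon
        obtain ⟨w, hw, hwi⟩ := hin
        have hs : s2F s(x, y) = {x, y} := rfl
        rw [hs]
        rcases Sym2.mem_iff.mp hz with rfl | rfl <;> rcases Sym2.mem_iff.mp hw with rfl | rfl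
        · exact absurd hwi hzo
        · -- z = x ∉ A, w = y ∈ A
          rw [Finset.filter_insert, if_pos hzo]
          have : ({w} : Finset V).filter (fun u => u ∉ A) = ∅ := by
            rw [Finset.filter_eq_empty_iff]
            intro u hu
            rw [Finset.mem_singleton] at hu
            subst hu
            simp only [not_not]
            exact hwi
          rw [this]
          simp
        · -- z = y ∉ A, w = x ∈ A
          rw [Finset.filter_insert, if_neg (by simpa using hwi)]
          rw [Finset.filter_singleton, if_pos hzo]
          simp
        · exact absurd hwi hzo
    have heB : ∀ e ∈ eBs G v, ((s2F e).filter fun z => z ∉ A).card = 2 := by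
      intro e he
      simp only [eBs, Finset.mem_filter] at he
      obtain ⟨hee, hout⟩ := he
      have : (s2F e).filter (fun z => z ∉ A) = s2F e := by
        rw [Finset.filter_eq_self]
        intro z hz
        exact hout z (mem_s2F.mp hz)
      rw [this, card_s2F (G.not_isDiag_of_mem_edgeFinset hee)]
    rw [hmA, Finset.sum_congr rfl hec, Finset.sum_congr rfl heB]
    simp [mul_comm]
  rw [← step1, step2, Finset.sum_congr rfl step3, step4]

lemma inc_le_tri : (inc G v).card ≤ (triangleFinset G).card := by
  apply Finset.card_le_card_of_injOn (fun p => insert p.2 (s2F p.1))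
  · rintro ⟨g, w⟩ hp
    simp only [Finset.mem_coe, inc, Finset.mem_filter, Finset.mem_product] at hp
    obtain ⟨⟨hg, -⟩, hside, hadj⟩ := hp
    have hnd : ¬ g.IsDiag := G.not_isDiag_of_mem_edgeFinset hg
    have hwng : w ∉ s2F g := by
      rw [mem_s2F]
      intro hw
      rcases hside with ⟨hin, hout⟩ | ⟨hout, hin⟩
      · exact hout (hin w hw)
      · exact hout w hw hin
    simp only [Finset.mem_coe, triangleFinset, Finset.mem_filter, Finset.mem_univ, true_and]
    constructor
    · rw [Finset.card_insert_of_notMem hwng, card_s2F hnd]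
    · intro a ha b hb hab
      simp only [Finset.mem_insert, mem_s2F] at ha hb
      rcases ha with rfl | ha <;> rcases hb with rfl | hb
      · exact absurd rfl hab
      · exact (hadj b hb).symm
      · exact hadj a ha
      · exact adj_of_edge G hg ha hb hab
  · rintro ⟨g, w⟩ hp ⟨g', w'⟩ hp' heq
    simp only [inc, Finset.mem_filter, Finset.mem_product, Finset.coe_filter] at hp hp'
    simp only [Set.mem_setOf_eq] at hp hp'
    obtain ⟨⟨hg, -⟩, hside, -⟩ := hp
    obtain ⟨⟨hg', -⟩, hside', -⟩ := hp'
    have hnd : ¬ g.IsDiag := G.not_isDiag_of_mem_edgeFinset hg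
    have hnd' : ¬ g'.IsDiag := G.not_isDiag_of_mem_edgeFinset hg'
    have heq' : insert w (s2F g) = insert w' (s2F g') := heq
    clear heq
    have hwng : w ∉ s2F g := by
      rw [mem_s2F]; intro hw
      rcases hside with ⟨hin, hout⟩ | ⟨hout, hin⟩
      · exact hout (hin w hw)
      · exact hout w hw hin
    have hwng' : w' ∉ s2F g' := by
      rw [mem_s2F]; intro hw
      rcases hside' with ⟨hin, hout⟩ | ⟨hout, hin⟩
      · exact hout (hin w' hw)
      · exact hout w' hw hin
    -- first: w = w'
    have hww : w = w' := by
      by_contra hne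
      -- w ∈ insert w' (s2F g'), so w ∈ s2F g', i.e. w ∈ g'
      have hw1 : w ∈ insert w' (s2F g') := by rw [← heq']; exact Finset.mem_insert_self _ _
      have hw2 : w ∈ s2F g' := by
        rcases Finset.mem_insert.mp hw1 with h | h
        · exact absurd h hne
        · exact h
      have hw1' : w' ∈ insert w (s2F g) := by rw [heq']; exact Finset.mem_insert_self _ _
      have hw2' : w' ∈ s2F g := by
        rcases Finset.mem_insert.mp hw1' with h | h
        · exact absurd h.symm hne
        · exact h
      -- sides
      rcases hside with ⟨hin, hout⟩ | ⟨hout, hin⟩ <;> rcases hside' with ⟨hin', hout'⟩ | ⟨hout', hin'⟩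
      · exact hout' (hin w' (mem_s2F.mp hw2'))
      · -- g ⊆ A, w ∉ A; g' ∩ A = ∅, w' ∈ A : then the two elements of g are in A,
        -- they lie in insert w' (s2F g') whose only element of A is w'
        have hx := sym2_exists_mem g
        obtain ⟨x, hx⟩ := hx
        obtain ⟨y, hg2⟩ := Sym2.mem_iff_exists.mp hx
        subst hg2
        have hxy : x ≠ y := by rwa [Sym2.mk_isDiag_iff] at hnd
        have hmemx : x ∈ insert w' (s2F g') := by
          rw [← heq']; exact Finset.mem_insert_of_mem (mem_s2F.mpr (by simp))
        have hmemy : y ∈ insert w' (s2F g') := by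
          rw [← heq']; exact Finset.mem_insert_of_mem (mem_s2F.mpr (by simp))
        have hxA : x ∈ G.neighborFinset v := hin x (by simp)
        have hyA : y ∈ G.neighborFinset v := hin y (by simp)
        have hx' : x = w' := by
          rcases Finset.mem_insert.mp hmemx with h | h
          · exact h
          · exact absurd hxA (hout' x (mem_s2F.mp h))
        have hy' : y = w' := by
          rcases Finset.mem_insert.mp hmemy with h | h
          · exact h
          · exact absurd hyA (hout' y (mem_s2F.mp h))
        exact absurd (hx'.trans hy'.symm) hxy
      · -- symmetric
        have hx := sym2_exists_mem g'
        obtain ⟨x, hx⟩ := hx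
        obtain ⟨y, hg2⟩ := Sym2.mem_iff_exists.mp hx
        subst hg2
        have hxy : x ≠ y := by rwa [Sym2.mk_isDiag_iff] at hnd'
        have hmemx : x ∈ insert w (s2F g) := by
          rw [heq']; exact Finset.mem_insert_of_mem (mem_s2F.mpr (by simp))
        have hmemy : y ∈ insert w (s2F g) := by
          rw [heq']; exact Finset.mem_insert_of_mem (mem_s2F.mpr (by simp))
        have hxA : x ∈ G.neighborFinset v := hin' x (by simp)
        have hyA : y ∈ G.neighborFinset v := hin' y (by simp)
        have hx' : x = w := by
          rcases Finset.mem_insert.mp hmemx with h | h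
          · exact h
          · exact absurd hxA (hout x (mem_s2F.mp h))
        have hy' : y = w := by
          rcases Finset.mem_insert.mp hmemy with h | h
          · exact h
          · exact absurd hyA (hout y (mem_s2F.mp h))
        exact absurd (hx'.trans hy'.symm) hxy
      · exact hout' w (mem_s2F.mp hw2) hin
    subst hww
    have hgg : s2F g = s2F g' := by
      have h1 : (insert w (s2F g)).erase w = (insert w (s2F g')).erase w := by rw [heq']
      rwa [Finset.erase_insert hwng, Finset.erase_insert hwng'] at h1
    have hg2 : g = g' := s2F_inj hgg
    rw [hg2]

lemma mA_le_inc : (mAs G v).card ≤ ((inc G v).filter fun p => p.2 = v).card := by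
  apply Finset.card_le_card_of_injOn (fun g => (g, v))
  · intro g hg
    simp only [Finset.mem_coe, mAs, Finset.mem_filter] at hg
    obtain ⟨hge, hgin⟩ := hg
    have hadj : ∀ x ∈ g, G.Adj x v := by
      intro x hx
      have := hgin x hx
      rw [SimpleGraph.mem_neighborFinset] at this
      exact this.symm
    exact Finset.mem_filter.mpr ⟨Finset.mem_filter.mpr
      ⟨Finset.mem_product.mpr ⟨hge, Finset.mem_univ v⟩, Or.inl ⟨hgin, by simp⟩, hadj⟩, rfl⟩
  · intro a _ b _ h
    exact (Prod.mk.injEq _ _ _ _).mp h |>.1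

lemma s0_cover (hE0 : ∀ e, e ∈ E0 ↔ e ∈ G.edgeFinset ∧ ∀ w : V, ¬ ∀ x ∈ e, G.Adj x w) :
    (s0s G v E0).card ≤ 2 * ((inc G v).filter fun p => p.2 ≠ v).card := by
  classical
  have hex : ∀ e ∈ s0s G v E0, ∃ p : Sym2 V × V,
      (p ∈ inc G v ∧ p.2 ≠ v) ∧ ∃ z ∈ p.1, e = s(z, p.2) := by
    intro e he
    simp only [s0s, Finset.mem_filter] at he
    obtain ⟨hee, hne0, ⟨hnin, hnout⟩, hvne⟩ := he
    have hcn : ∃ u, ∀ x ∈ e, G.Adj x u := by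
      by_contra hcon
      push_neg at hcon
      apply hne0
      refine (hE0 e).mpr ⟨hee, fun w hall => ?_⟩
      obtain ⟨x, hx, hnadj⟩ := hcon w
      exact hnadj (hall x hx)
    obtain ⟨u, hu⟩ := hcn
    induction e using Sym2.ind with
    | _ a b =>
      have hab : G.Adj a b := by simpa using hee
      have hau : G.Adj a u := hu a (by simp)
      have hbu : G.Adj b u := hu b (by simp)
      have hva : a ≠ v := fun h => hvne (by rw [h]; simp)
      have hvb : b ≠ v := fun h => hvne (by rw [h]; simp)
      by_cases ha : a ∈ G.neighborFinset v <;> by_cases hb : b ∈ G.neighborFinset v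
      · exact absurd (fun x hx => by
          rcases Sym2.mem_iff.mp hx with rfl | rfl
          exacts [ha, hb]) hnin
      · -- a ∈ A, b ∉ A
        by_cases hu' : u ∈ G.neighborFinset v
        · refine ⟨(s(a, u), b), ⟨Finset.mem_filter.mpr
            ⟨Finset.mem_product.mpr ⟨by simpa using hau, Finset.mem_univ b⟩,
              Or.inl ⟨fun x hx => by
                rcases Sym2.mem_iff.mp hx with rfl | rfl
                exacts [ha, hu'], hb⟩,
              fun x hx => by
                rcases Sym2.mem_iff.mp hx with rfl | rfl
                exacts [hab, hbu.symm]⟩, hvb⟩, a, by simp, rfl⟩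
        · refine ⟨(s(u, b), a), ⟨Finset.mem_filter.mpr
            ⟨Finset.mem_product.mpr ⟨by simpa using hbu.symm, Finset.mem_univ a⟩,
              Or.inr ⟨fun x hx => by
                rcases Sym2.mem_iff.mp hx with rfl | rfl
                exacts [hu', hb], ha⟩,
              fun x hx => by
                rcases Sym2.mem_iff.mp hx with rfl | rfl
                exacts [hau.symm, hab.symm]⟩, hva⟩, b, by simp, Sym2.eq_swap⟩
      · -- a ∉ A, b ∈ A
        by_cases hu' : u ∈ G.neighborFinset v
        · refine ⟨(s(b, u), a), ⟨Finset.mem_filter.mpr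
            ⟨Finset.mem_product.mpr ⟨by simpa using hbu, Finset.mem_univ a⟩,
              Or.inl ⟨fun x hx => by
                rcases Sym2.mem_iff.mp hx with rfl | rfl
                exacts [hb, hu'], ha⟩,
              fun x hx => by
                rcases Sym2.mem_iff.mp hx with rfl | rfl
                exacts [hab.symm, hau.symm]⟩, hva⟩, b, by simp, Sym2.eq_swap⟩
        · refine ⟨(s(u, a), b), ⟨Finset.mem_filter.mpr
            ⟨Finset.mem_product.mpr ⟨by simpa using hau.symm, Finset.mem_univ b⟩,
              Or.inr ⟨fun x hx => by
                rcases Sym2.mem_iff.mp hx with rfl | rfl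
                exacts [hu', ha], hb⟩,
              fun x hx => by
                rcases Sym2.mem_iff.mp hx with rfl | rfl
                exacts [hbu.symm, hab]⟩, hvb⟩, a, by simp, rfl⟩
      · exact absurd (fun x hx => by
          rcases Sym2.mem_iff.mp hx with rfl | rfl
          exacts [ha, hb]) hnout
  set F : Sym2 V → Sym2 V × V := fun e =>
    if h : ∃ p : Sym2 V × V, (p ∈ inc G v ∧ p.2 ≠ v) ∧ ∃ z ∈ p.1, e = s(z, p.2) then h.choose
    else (e, v) with hF
  have hFspec : ∀ e ∈ s0s G v E0,
      F e ∈ (inc G v).filter (fun p => p.2 ≠ v) ∧ ∃ z ∈ (F e).1, e = s(z, (F e).2) := by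
    intro e he
    have h := hex e he
    rw [hF]
    simp only [dif_pos h]
    obtain ⟨h1, h2⟩ := h.choose_spec
    exact ⟨Finset.mem_filter.mpr ⟨h1.1, h1.2⟩, h2⟩
  apply Finset.card_le_mul_card_image_of_maps_to (f := F)
    (t := (inc G v).filter fun p => p.2 ≠ v) (fun e he => (hFspec e he).1) 2
  rintro ⟨g, w⟩ hp
  induction g using Sym2.ind with
  | _ a b =>
    have hsub : (s0s G v E0).filter (fun e => F e = (s(a, b), w)) ⊆
        ({s(a, w), s(b, w)} : Finset (Sym2 V)) := by
      intro e he'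
      obtain ⟨he, hFe⟩ := Finset.mem_filter.mp he'
      obtain ⟨-, z, hz, hze⟩ := hFspec e he
      rw [hFe] at hz hze
      simp only [Finset.mem_insert, Finset.mem_singleton]
      rcases Sym2.mem_iff.mp hz with rfl | rfl
      · exact Or.inl hze
      · exact Or.inr hze
    calc ((s0s G v E0).filter fun e => F e = (s(a, b), w)).card
        ≤ ({s(a, w), s(b, w)} : Finset (Sym2 V)).card := Finset.card_le_card hsub
      _ ≤ 2 := Finset.card_insert_le _ _ |>.trans (by simp)

lemma two_tri_ge :
    (hE0 : ∀ e, e ∈ E0 ↔ e ∈ G.edgeFinset ∧ ∀ w : V, ¬ ∀ x ∈ e, G.Adj x w) →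
    2 * (mAs G v).card + (s0s G v E0).card ≤ 2 * (triangleFinset G).card := by
  intro hE0
  have h1 := inc_le_tri G v
  have h2 := mA_le_inc G v
  have h3 := s0_cover G v E0 hE0
  have h4 : ((inc G v).filter fun p => p.2 = v).card +
      ((inc G v).filter fun p => p.2 ≠ v).card = (inc G v).card :=
    Finset.card_filter_add_card_filter_not _
  omega

lemma c0_le : (c0s G v E0).card ≤ E0.card := by
  apply Finset.card_le_card
  intro e he
  simp only [c0s, Finset.mem_filter] at he
  exact he.2.2

lemma c1v_le : (c1vs G v E0).card ≤ G.degree v := by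
  calc (c1vs G v E0).card ≤ (G.incidenceFinset v).card :=
        Finset.card_le_card (c1vs_subset_incidence G v E0)
    _ = G.degree v := SimpleGraph.card_incidenceFinset_eq_degree G v

lemma c1v_lt (h : ∃ e ∈ E0, v ∈ e)
    (hE0 : ∀ e, e ∈ E0 ↔ e ∈ G.edgeFinset ∧ ∀ w : V, ¬ ∀ x ∈ e, G.Adj x w) :
    (c1vs G v E0).card + 1 ≤ G.degree v := by
  obtain ⟨e, heE0, hve⟩ := h
  have hss : c1vs G v E0 ⊂ G.incidenceFinset v := by
    refine ⟨c1vs_subset_incidence G v E0, fun hsub => ?_⟩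
    have he : e ∈ G.incidenceFinset v := by
      rw [SimpleGraph.mem_incidenceFinset]
      exact ⟨SimpleGraph.mem_edgeFinset.mp (((hE0 e).mp heE0).1), hve⟩
    have := hsub he
    simp only [c1vs, Finset.mem_filter] at this
    exact this.2.2 heE0
  have := Finset.card_lt_card hss
  rw [SimpleGraph.card_incidenceFinset_eq_degree G v] at this
  omega

/-- The core counting inequality. -/
lemma core (hE0 : ∀ e, e ∈ E0 ↔ e ∈ G.edgeFinset ∧ ∀ w : V, ¬ ∀ x ∈ e, G.Adj x w) :
    2 * G.edgeFinset.card ≤ 2 * (triangleFinset G).card + E0.card +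
      (∑ b ∈ (G.neighborFinset v)ᶜ, G.degree b) + (c1vs G v E0).card := by
  have h1 := edge_partition G v
  have h2 := ecs_split G v E0 hE0
  have h3 := sum_deg_eq G v
  have h4 := two_tri_ge G v E0 hE0
  have h5 := c0_le G v E0
  omega

lemma odd_sq_mod_eight {N : ℕ} (h : N % 2 = 1) : N ^ 2 % 8 = 1 := by
  obtain ⟨k, rfl⟩ : ∃ k, N = 2 * k + 1 := ⟨N / 2, by omega⟩
  have h2 : (2 * k + 1) ^ 2 = 4 * (k * (k + 1)) + 1 := by ring
  have h3 : ∃ j, k * (k + 1) = 2 * j := by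
    rcases Nat.even_or_odd k with ⟨j, hj⟩ | ⟨j, hj⟩
    · exact ⟨j * (k + 1), by rw [hj]; ring⟩
    · exact ⟨k * (j + 1), by rw [hj]; ring⟩
  obtain ⟨j, hj⟩ := h3
  rw [h2, hj]
  omega

lemma arith_crit (N Δ : ℕ) (hΔ : Δ ≤ N) (h : ¬ (Δ * (N - Δ) ≤ 2 * (N ^ 2 / 8))) :
    N = 2 * Δ ∧ Δ % 2 = 1 ∧ 2 * (N ^ 2 / 8) + 1 = Δ * Δ := by
  have hdm := Nat.div_add_mod (N ^ 2) 8
  have hmod : N ^ 2 % 8 < 8 := Nat.mod_lt _ (by norm_num)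
  have hΔpos : 0 < Δ := by
    rcases Nat.eq_zero_or_pos Δ with h0 | h0
    · exfalso; apply h; rw [h0]; simp
    · exact h0
  have hlow : 2 * (N ^ 2 / 8) + 1 ≤ Δ * (N - Δ) := by omega
  have hlowz : (2 * ((N ^ 2 / 8 : ℕ) : ℤ) + 1 : ℤ) ≤ ((Δ * (N - Δ) : ℕ) : ℤ) := by
    exact_mod_cast hlow
  have hsq : ((N : ℤ) - 2 * Δ) ^ 2 = (N : ℤ) ^ 2 - 4 * ((Δ * (N - Δ) : ℕ) : ℤ) := by
    push_cast [Nat.cast_sub hΔ]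
    ring
  have h8 : ((N : ℤ)) ^ 2 = 8 * ((N ^ 2 / 8 : ℕ) : ℤ) + ((N ^ 2 % 8 : ℕ) : ℤ) := by
    exact_mod_cast hdm.symm
  have hs2 : ((N : ℤ) - 2 * Δ) ^ 2 ≤ ((N ^ 2 % 8 : ℕ) : ℤ) - 4 := by
    nlinarith [hsq, hlowz, h8]
  have hmodz : ((N ^ 2 % 8 : ℕ) : ℤ) ≤ 7 := by exact_mod_cast Nat.le_of_lt_succ hmod
  have hsmall : -2 < (N : ℤ) - 2 * Δ ∧ (N : ℤ) - 2 * Δ < 2 := by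
    constructor <;> nlinarith [hs2, hmodz]
  have hNrange : N = 2 * Δ - 1 ∨ N = 2 * Δ ∨ N = 2 * Δ + 1 := by omega
  have hodd_case : ∀ (hN1 : N % 2 = 1), False := by
    intro hN1
    have hsqmod := odd_sq_mod_eight hN1
    rw [hsqmod] at hs2
    have hone : (1 : ℤ) ≤ ((N : ℤ) - 2 * Δ) ^ 2 := by
      have hne : (N : ℤ) - 2 * Δ ≠ 0 := by
        intro hzero
        have : N = 2 * Δ := by omega
        omega
      have := sq_pos_of_ne_zero hne
      omega
    norm_num at hs2
    omega
  have hN2 : N = 2 * Δ := by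
    rcases hNrange with h1 | h1 | h1
    · exact absurd (by omega : N % 2 = 1) (fun hh => hodd_case hh)
    · exact h1
    · exact absurd (by omega : N % 2 = 1) (fun hh => hodd_case hh)
  subst hN2
  have hq : (2 * Δ) ^ 2 = 4 * (Δ * Δ) := by ring
  have hr4 : 4 ≤ (2 * Δ) ^ 2 % 8 := by
    have hz : ((2 * Δ : ℕ) : ℤ) - 2 * Δ = 0 := by push_cast; ring
    rw [hz] at hs2
    have h4 : (4 : ℤ) ≤ (((2 * Δ) ^ 2 % 8 : ℕ) : ℤ) := by nlinarith [hs2]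
    exact_mod_cast h4
  have hNd : 2 * Δ - Δ = Δ := by omega
  rw [hNd] at hlow
  have hpar : Δ * Δ % 2 = Δ % 2 := by
    conv_lhs => rw [Nat.mul_mod]
    rcases Nat.even_or_odd Δ with hΔ2 | hΔ2
    · have : Δ % 2 = 0 := Nat.even_iff.mp hΔ2
      simp [this]
    · have : Δ % 2 = 1 := Nat.odd_iff.mp hΔ2
      simp [this]
  rw [hq] at hdm hmod hr4
  refine ⟨rfl, by omega, by rw [hq]; omega⟩

end Stmt6Aux

theorem stmt6 {V : Type*} [Fintype V] [DecidableEq V] (n : ℕ) (hn0 : 0 < n)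
    (hn : Fintype.card V = n) (G : SimpleGraph V) [DecidableRel G.Adj]
    (E0 : Finset (Sym2 V))
    (hE0 : ∀ e, e ∈ E0 ↔ e ∈ G.edgeFinset ∧ ∀ w : V, ¬ ∀ v ∈ e, G.Adj v w) :
    (G.edgeFinset.card : ℚ) - (triangleFinset G).card - (E0.card : ℚ) / 2 ≤
      (((n + 1) ^ 2 / 8 : ℕ) : ℚ) := by
  classical
  suffices h : 2 * G.edgeFinset.card ≤ 2 * (triangleFinset G).card + E0.card +
      2 * ((n + 1) ^ 2 / 8) by
    have hq := (Nat.cast_le (α := ℚ)).mpr h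
    push_cast at hq
    linarith
  -- choose a vertex of maximum degree
  have hne : (Finset.univ : Finset V).Nonempty := by
    rw [← Finset.card_pos, Finset.card_univ, hn]
    exact hn0
  obtain ⟨v, -, hv⟩ := Finset.exists_max_image (Finset.univ : Finset V) (fun u => G.degree u) hne
  have hvmax : ∀ u : V, G.degree u ≤ G.degree v := fun u => hv u (Finset.mem_univ u)
  set Δ := G.degree v with hΔdef
  have hΔn : Δ < n := by
    rw [← hn]
    exact G.degree_lt_card_verts v
  -- sum of degrees outside a max-degree vertex's neighborhood
  have hsum : ∀ u : V, G.degree u = Δ →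
      (∑ b ∈ (G.neighborFinset u)ᶜ, G.degree b) ≤ (n - Δ) * Δ := by
    intro u hu
    have h1 : ∑ b ∈ (G.neighborFinset u)ᶜ, G.degree b ≤ (G.neighborFinset u)ᶜ.card * Δ := by
      calc ∑ b ∈ (G.neighborFinset u)ᶜ, G.degree b ≤
          ∑ _b ∈ (G.neighborFinset u)ᶜ, Δ := Finset.sum_le_sum (fun b _ => hvmax b)
        _ = (G.neighborFinset u)ᶜ.card * Δ := by rw [Finset.sum_const, smul_eq_mul]
    have h2 : (G.neighborFinset u)ᶜ.card = n - Δ := by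
      rw [Finset.card_compl, SimpleGraph.card_neighborFinset_eq_degree, hu, hn]
    rwa [h2] at h1
  -- core inequality for any max-degree vertex
  have hcore : ∀ u : V, G.degree u = Δ →
      2 * G.edgeFinset.card ≤ 2 * (triangleFinset G).card + E0.card +
        (∑ b ∈ (G.neighborFinset u)ᶜ, G.degree b) + (Stmt6Aux.c1vs G u E0).card :=
    fun u _ => Stmt6Aux.core G u E0 hE0
  by_cases h1 : Δ * (n - Δ) + Δ ≤ 2 * ((n + 1) ^ 2 / 8)
  · -- non-critical case
    have hc := Stmt6Aux.c1v_le G v E0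
    have hs := hsum v rfl
    have hco := hcore v rfl
    have hcomm : (n - Δ) * Δ = Δ * (n - Δ) := Nat.mul_comm _ _
    omega
  · -- critical case : n + 1 = 2Δ, Δ odd
    have hΔN : Δ ≤ n + 1 := by omega
    have harith : ¬ (Δ * ((n + 1) - Δ) ≤ 2 * ((n + 1) ^ 2 / 8)) := by
      have : (n + 1) - Δ = (n - Δ) + 1 := by omega
      rw [this, Nat.mul_add, Nat.mul_one]
      exact h1
    obtain ⟨hN2, hΔodd, hK⟩ := Stmt6Aux.arith_crit (n + 1) Δ hΔN harith
    have hprod : Δ * (n - Δ) + Δ = Δ * Δ := by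
      have hz : ((Δ * (n - Δ) + Δ : ℕ) : ℤ) = ((Δ * Δ : ℕ) : ℤ) := by
        push_cast [Nat.cast_sub (le_of_lt hΔn)]
        have hzn : (n : ℤ) + 1 = 2 * (Δ : ℤ) := by exact_mod_cast hN2
        linear_combination (Δ : ℤ) * hzn
      exact_mod_cast hz
    by_cases h2 : ∃ u : V, G.degree u = Δ ∧ ∃ e ∈ E0, u ∈ e
    · -- some max-degree vertex is in an E0 edge
      obtain ⟨u, hu, heu⟩ := h2
      have hc := Stmt6Aux.c1v_lt G u E0 heu hE0
      rw [hu] at hc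
      have hs := hsum u hu
      have hco := hcore u hu
      have hcomm : (n - Δ) * Δ = Δ * (n - Δ) := Nat.mul_comm _ _
      omega
    · -- no max-degree vertex is in an E0 edge
      push_neg at h2
      by_cases h3 : (∑ b ∈ (G.neighborFinset v)ᶜ, G.degree b) + 1 ≤ (n - Δ) * Δ
      · have hc := Stmt6Aux.c1v_le G v E0
        have hco := hcore v rfl
        have hcomm : (n - Δ) * Δ = Δ * (n - Δ) := Nat.mul_comm _ _
        omega
      · -- the degree sum is exactly (n-Δ)*Δ : all outside degrees are Δ, E0 is empty
        have hs := hsum v rfl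
        have hsumeq : (∑ b ∈ (G.neighborFinset v)ᶜ, G.degree b) = (n - Δ) * Δ := by omega
        have hall : ∀ b ∈ (G.neighborFinset v)ᶜ, G.degree b = Δ := by
          by_contra hcon
          push_neg at hcon
          obtain ⟨b, hb, hbne⟩ := hcon
          have hlt : G.degree b < Δ := lt_of_le_of_ne (hvmax b) hbne
          have : (∑ c ∈ (G.neighborFinset v)ᶜ, G.degree c) <
              ∑ _c ∈ (G.neighborFinset v)ᶜ, Δ :=
            Finset.sum_lt_sum (fun c _ => hvmax c) ⟨b, hb, hlt⟩
          rw [Finset.sum_const, smul_eq_mul, Finset.card_compl,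
            SimpleGraph.card_neighborFinset_eq_degree, ← hΔdef, hn] at this
          omega
        have hE0empty : E0 = ∅ := by
          rw [Finset.eq_empty_iff_forall_notMem]
          intro e he
          have hee : e ∈ G.edgeFinset := ((hE0 e).mp he).1
          by_cases hcase : ∀ x ∈ e, x ∈ G.neighborFinset v
          · exact ((hE0 e).mp he).2 v (fun x hx => by
              have := hcase x hx
              rw [SimpleGraph.mem_neighborFinset] at this
              exact this.symm)
          · push_neg at hcase
            obtain ⟨b, hb, hbn⟩ := hcase
            have hbc : b ∈ (G.neighborFinset v)ᶜ := Finset.mem_compl.mpr hbn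
            exact h2 b (hall b hbc) e he hb
        have hz0 : E0.card = 0 := by rw [hE0empty]; rfl
        have hc := Stmt6Aux.c1v_le G v E0
        have hco := hcore v rfl
        have hcomm : (n - Δ) * Δ = Δ * (n - Δ) := Nat.mul_comm _ _
        -- 2e ≤ 2t + Δ*Δ = 2t + 2K + 1 , parity gives 2e ≤ 2t + 2K
        omega
end

section
/- Let D = D_2 ∪ D_3 be a dominating set of the bipartite graph G_{3,2} on vertex set (all 2-subsets of [n]) ∪ (all 3-subsets of [n]) with edges given by inclusion, where D_i = D ∩ ([n] choose i). Let H be the graph on [n] with edge set ΔD_3 \ D_2 (the 2-subsets contained in some member of D_3 but not in D_2), let T be the set of triangles of H and E_0 the set of edges of H not in any triangle. Then |D| ≥ C(n,2) - (|E(H)| - |T| - ⌈|E_0|/2⌉). -/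
/-- Vertices of `G_{3,2}`: the 2-element and 3-element subsets of `[n]`. -/
abbrev G32Vert (n : ℕ) := {s : Finset (Fin n) // s.card = 2 ∨ s.card = 3}

/-- The bipartite graph `G_{3,2}` between 2-subsets and 3-subsets of `[n]`,
with adjacency given by (strict) inclusion. -/
def G32 (n : ℕ) : SimpleGraph (G32Vert n) where
  Adj A B := A.1 ⊂ B.1 ∨ B.1 ⊂ A.1
  symm := ⟨fun A B h => Or.symm h⟩
  loopless := ⟨fun A h => by
    rcases h with h | h <;> exact (ssubset_irrefl _ h)⟩

/-- A set of vertices is dominating if every vertex outside it has a neighbor in it. -/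
def IsDominating {V : Type*} (G : SimpleGraph V) (D : Finset V) : Prop :=
  ∀ v ∉ D, ∃ u ∈ D, G.Adj u v

theorem stmt8 (n : ℕ) (D : Finset (G32Vert n)) (hD : IsDominating (G32 n) D)
    (EH T E0 : Finset (Finset (Fin n)))
    (hEH : ∀ e, e ∈ EH ↔ e.card = 2 ∧ (∃ A ∈ D, A.1.card = 3 ∧ e ⊆ A.1) ∧
      ¬ ∃ A ∈ D, A.1 = e)
    (hT : ∀ t, t ∈ T ↔ t.card = 3 ∧ ∀ e ⊆ t, e.card = 2 → e ∈ EH)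
    (hE0 : ∀ e, e ∈ E0 ↔ e ∈ EH ∧ ¬ ∃ t ∈ T, e ⊆ t) :
    (D.card : ℤ) ≥ (n.choose 2 : ℤ) -
      ((EH.card : ℤ) - (T.card : ℤ) - (((E0.card + 1) / 2 : ℕ) : ℤ)) := by
  classical
  set D2 : Finset (G32Vert n) := D.filter (fun A => A.1.card = 2) with hD2def
  set D3T : Finset (G32Vert n) := D.filter (fun A => A.1.card = 3 ∧ A.1 ∈ T) with hD3Tdef
  set D3N : Finset (G32Vert n) := D.filter (fun A => A.1.card = 3 ∧ A.1 ∉ T) with hD3Ndef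
  -- the three pieces are disjoint subsets of D
  have hsum : D2.card + D3T.card + D3N.card ≤ D.card := by
    have hd12 : Disjoint D2 D3T := by
      rw [Finset.disjoint_left]
      intro a h1 h2
      simp only [hD2def, hD3Tdef, Finset.mem_filter] at h1 h2
      omega
    have hd3 : Disjoint (D2 ∪ D3T) D3N := by
      rw [Finset.disjoint_left]
      intro a h1 h2
      simp only [hD2def, hD3Tdef, hD3Ndef, Finset.mem_union, Finset.mem_filter] at h1 h2
      rcases h1 with h1 | h1
      · omega
      · exact h2.2.2 h1.2.2
    have hsub : D2 ∪ D3T ∪ D3N ⊆ D := by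
      intro x hx
      simp only [hD2def, hD3Tdef, hD3Ndef, Finset.mem_union, Finset.mem_filter] at hx
      tauto
    calc D2.card + D3T.card + D3N.card
        = (D2 ∪ D3T).card + D3N.card := by
          rw [Finset.card_union_of_disjoint hd12]
      _ = (D2 ∪ D3T ∪ D3N).card := (Finset.card_union_of_disjoint hd3).symm
      _ ≤ D.card := Finset.card_le_card hsub
  -- Claim 1: every 2-subset is in D2 (as value) or in EH
  have h1 : n.choose 2 ≤ D2.card + EH.card := by
    have hsub : (Finset.univ : Finset (Fin n)).powersetCard 2 ⊆
        D2.image (fun A => A.1) ∪ EH := by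
      intro e he
      rw [Finset.mem_powersetCard] at he
      have he2 : e.card = 2 := he.2
      by_cases hA : ∃ A ∈ D, A.1 = e
      · obtain ⟨A, hAD, hAe⟩ := hA
        apply Finset.mem_union_left
        refine Finset.mem_image.2 ⟨A, ?_, hAe⟩
        simp only [hD2def, Finset.mem_filter]
        exact ⟨hAD, by rw [hAe]; exact he2⟩
      · apply Finset.mem_union_right
        have hv : (⟨e, Or.inl he2⟩ : G32Vert n) ∉ D := by
          intro hvD
          exact hA ⟨⟨e, Or.inl he2⟩, hvD, rfl⟩
        obtain ⟨u, huD, hadj⟩ := hD _ hv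
        rcases hadj with hss | hss
        · have hlt : u.1.card < 2 := by
            simpa [he2] using Finset.card_lt_card hss
          rcases u.2 with h | h <;> omega
        · have hlt : 2 < u.1.card := by
            simpa [he2] using Finset.card_lt_card hss
          have hu3 : u.1.card = 3 := by
            rcases u.2 with h | h <;> omega
          rw [hEH]
          exact ⟨he2, ⟨u, huD, hu3, hss.1⟩, hA⟩
    calc n.choose 2 = ((Finset.univ : Finset (Fin n)).powersetCard 2).card := by
          rw [Finset.card_powersetCard, Finset.card_univ, Fintype.card_fin]
      _ ≤ (D2.image (fun A => A.1) ∪ EH).card := Finset.card_le_card hsub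
      _ ≤ (D2.image (fun A => A.1)).card + EH.card := Finset.card_union_le _ _
      _ ≤ D2.card + EH.card := by
          exact Nat.add_le_add_right (Finset.card_image_le) _
  -- Claim 2: every triangle is in D
  have h2 : T.card ≤ D3T.card := by
    have hsub : T ⊆ D3T.image (fun A => A.1) := by
      intro t htT
      have ht3 : t.card = 3 := ((hT t).1 htT).1
      have hedges := ((hT t).1 htT).2
      have hv : (⟨t, Or.inr ht3⟩ : G32Vert n) ∈ D := by
        by_contra hvD
        obtain ⟨u, huD, hadj⟩ := hD _ hvD
        rcases hadj with hss | hss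
        · have hlt : u.1.card < 3 := by
            simpa [ht3] using Finset.card_lt_card hss
          have hu2 : u.1.card = 2 := by rcases u.2 with h | h <;> omega
          have huEH : u.1 ∈ EH := hedges u.1 hss.1 hu2
          exact ((hEH u.1).1 huEH).2.2 ⟨u, huD, rfl⟩
        · have hlt : 3 < u.1.card := by
            simpa [ht3] using Finset.card_lt_card hss
          rcases u.2 with h | h <;> omega
      refine Finset.mem_image.2 ⟨⟨t, Or.inr ht3⟩, ?_, rfl⟩
      simp only [hD3Tdef, Finset.mem_filter]
      exact ⟨hv, ht3, htT⟩
    calc T.card ≤ (D3T.image (fun A => A.1)).card := Finset.card_le_card hsub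
      _ ≤ D3T.card := Finset.card_image_le
  -- Claim 3: each E0 edge lies in a non-triangle 3-set of D, each covering ≤ 2
  have h3 : E0.card ≤ 2 * D3N.card := by
    have hsub : E0 ⊆ D3N.biUnion (fun A => A.1.powersetCard 2 ∩ EH) := by
      intro e heE0
      have heEH : e ∈ EH := ((hE0 e).1 heE0).1
      have hnot : ¬ ∃ t ∈ T, e ⊆ t := ((hE0 e).1 heE0).2
      obtain ⟨he2, ⟨A, hAD, hA3, heA⟩, -⟩ := (hEH e).1 heEH
      have hAnT : A.1 ∉ T := fun hAT => hnot ⟨A.1, hAT, heA⟩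
      refine Finset.mem_biUnion.2 ⟨A, ?_, ?_⟩
      · simp only [hD3Ndef, Finset.mem_filter]
        exact ⟨hAD, hA3, hAnT⟩
      · exact Finset.mem_inter.2 ⟨Finset.mem_powersetCard.2 ⟨heA, he2⟩, heEH⟩
    have hbd : ∀ A ∈ D3N, (A.1.powersetCard 2 ∩ EH).card ≤ 2 := by
      intro A hA
      simp only [hD3Ndef, Finset.mem_filter] at hA
      obtain ⟨hAD, hA3, hAnT⟩ := hA
      have : ¬ (A.1.card = 3 ∧ ∀ e ⊆ A.1, e.card = 2 → e ∈ EH) := fun h => hAnT ((hT A.1).2 h)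
      push_neg at this
      obtain ⟨e0, he0A, he02, he0EH⟩ := this hA3
      have he0mem : e0 ∈ A.1.powersetCard 2 := Finset.mem_powersetCard.2 ⟨he0A, he02⟩
      have hsub' : A.1.powersetCard 2 ∩ EH ⊆ (A.1.powersetCard 2).erase e0 := by
        intro x hx
        rw [Finset.mem_inter] at hx
        refine Finset.mem_erase.2 ⟨?_, hx.1⟩
        rintro rfl
        exact he0EH hx.2
      have hcard : (A.1.powersetCard 2).card = 3 := by
        rw [Finset.card_powersetCard, hA3]; decide
      calc (A.1.powersetCard 2 ∩ EH).card
          ≤ ((A.1.powersetCard 2).erase e0).card := Finset.card_le_card hsub'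
        _ = 2 := by rw [Finset.card_erase_of_mem he0mem, hcard]
    calc E0.card ≤ (D3N.biUnion (fun A => A.1.powersetCard 2 ∩ EH)).card :=
          Finset.card_le_card hsub
      _ ≤ ∑ A ∈ D3N, (A.1.powersetCard 2 ∩ EH).card := Finset.card_biUnion_le
      _ ≤ ∑ _A ∈ D3N, 2 := Finset.sum_le_sum hbd
      _ = 2 * D3N.card := by rw [Finset.sum_const, smul_eq_mul, mul_comm]
  omega
end

section
/- Fix k ≥ 2 and 0 < α < 1. There exists a sequence of well-covered k-uniform hypergraphs H on n vertices such that e(H) − c(H) ≥ ((k−1)α(1−α)^{k−1} + o(1))·C(n,k), where e(H) is the number of edges and c(H) is the number of (k+1)-cliques of H. -/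
open Filter

/-- `E` is the edge set of a `k`-uniform hypergraph on `Fin n`. -/
def IsKGraph (n k : ℕ) (E : Finset (Finset (Fin n))) : Prop :=
  ∀ e ∈ E, e.card = k

/-- `c` is a `(k+1)`-clique of the `k`-uniform hypergraph with edge set `E`:
a `(k+1)`-set all of whose `k`-subsets are edges. -/
def IsHyperClique (n k : ℕ) (E : Finset (Finset (Fin n))) (c : Finset (Fin n)) : Prop :=
  c.card = k + 1 ∧ ∀ f ∈ c.powerset, f.card = k → f ∈ E

/-- A `k`-uniform hypergraph is well-covered if every edge lies in a `(k+1)`-clique. -/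
def WellCovered (n k : ℕ) (E : Finset (Finset (Fin n))) : Prop :=
  ∀ e ∈ E, ∃ c : Finset (Fin n), IsHyperClique n k E c ∧ e ⊆ c

/-- The number of `(k+1)`-cliques. -/
def cliqueCount (n k : ℕ) (E : Finset (Finset (Fin n))) : ℕ :=
  (Finset.univ.filter fun c : Finset (Fin n) =>
    c.card = k + 1 ∧ ∀ f ∈ c.powerset, f.card = k → f ∈ E).card


open Finset

def Fpred (n k b : ℕ) (S : Finset (Fin n)) : Prop :=
  S.card = k ∧ (∀ v ∈ S, v.val < b) ∧ (∑ v ∈ S, v.val) % b = 0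

def Epred (n k b : ℕ) (T : Finset (Fin n)) : Prop :=
  T.card = k ∧ (Fpred n k b T ∨ ∃ x ∈ T, b ≤ x.val ∧ (∀ v ∈ T.erase x, v.val < b) ∧
    ∃ S : Finset (Fin n), Fpred n k b S ∧ T.erase x ⊆ S)

open scoped Classical in
noncomputable def Fset (n k b : ℕ) : Finset (Finset (Fin n)) :=
  Finset.univ.filter (Fpred n k b)

open scoped Classical in
noncomputable def Eset (n k b : ℕ) : Finset (Finset (Fin n)) :=
  Finset.univ.filter (Epred n k b)

lemma mem_Fset {n k b : ℕ} {S : Finset (Fin n)} : S ∈ Fset n k b ↔ Fpred n k b S := by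
  classical simp [Fset]

lemma mem_Eset {n k b : ℕ} {T : Finset (Fin n)} : T ∈ Eset n k b ↔ Epred n k b T := by
  classical simp [Eset]

lemma exists_insert_of_subset_card {n : ℕ} {U S : Finset (Fin n)}
    (hU : U ⊆ S) (hc : U.card + 1 = S.card) : ∃ u ∉ U, S = insert u U := by
  have hne : U ≠ S := fun h => by rw [h] at hc; omega
  obtain ⟨u, huS, huU⟩ := Finset.exists_of_ssubset
    (⟨hU, fun h => hne (Finset.Subset.antisymm hU h)⟩ : U ⊂ S)
  refine ⟨u, huU, ?_⟩
  refine (Finset.eq_of_subset_of_card_le (Finset.insert_subset huS hU) ?_).symm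
  rw [Finset.card_insert_of_notMem huU]; omega

/-- unique extension / packing property -/
lemma uniqueExt {n k b : ℕ} {S₁ S₂ U : Finset (Fin n)}
    (h1 : Fpred n k b S₁) (h2 : Fpred n k b S₂)
    (hU1 : U ⊆ S₁) (hU2 : U ⊆ S₂) (hcard : U.card + 1 = k) : S₁ = S₂ := by
  obtain ⟨u, huU, hS1⟩ := exists_insert_of_subset_card hU1 (by rw [h1.1]; omega)
  obtain ⟨w, hwU, hS2⟩ := exists_insert_of_subset_card hU2 (by rw [h2.1]; omega)
  have hsum1 : (u.val + ∑ v ∈ U, v.val) % b = 0 := by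
    have := h1.2.2; rwa [hS1, Finset.sum_insert huU] at this
  have hsum2 : (w.val + ∑ v ∈ U, v.val) % b = 0 := by
    have := h2.2.2; rwa [hS2, Finset.sum_insert hwU] at this
  have hmod : u.val ≡ w.val [MOD b] :=
    Nat.ModEq.add_right_cancel (Nat.ModEq.refl _)
      (show _ ≡ _ [MOD b] from hsum1.trans hsum2.symm)
  have hu : u.val < b := h1.2.1 u (hS1 ▸ Finset.mem_insert_self u U)
  have hw : w.val < b := h2.2.1 w (hS2 ▸ Finset.mem_insert_self w U)
  have huw : u = w := Fin.ext (by
    have := hmod; unfold Nat.ModEq at this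
    rwa [Nat.mod_eq_of_lt hu, Nat.mod_eq_of_lt hw] at this)
  rw [hS1, hS2, huw]

/-- Any `k`-subset of a `(k+1)`-set is obtained by erasing one element. -/
lemma eq_erase_of_subset_card {n k : ℕ} {f c : Finset (Fin n)}
    (hfc : f ⊆ c) (hc : c.card = k + 1) (hf : f.card = k) :
    ∃ w ∈ c, w ∉ f ∧ f = c.erase w := by
  obtain ⟨w, hwf, hcw⟩ := exists_insert_of_subset_card hfc (by omega)
  refine ⟨w, by rw [hcw]; exact Finset.mem_insert_self w f, hwf, ?_⟩
  rw [hcw, Finset.erase_insert hwf]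

/-- Inserting any outer vertex into an `F`-edge yields a hyperclique. -/
lemma hyperclique_insert {n k b : ℕ} (hk : 1 ≤ k) {S : Finset (Fin n)} {x : Fin n}
    (hS : Fpred n k b S) (hx : b ≤ x.val) :
    IsHyperClique n k (Eset n k b) (insert x S) := by
  have hxS : x ∉ S := fun h => absurd (hS.2.1 x h) (by omega)
  constructor
  · rw [Finset.card_insert_of_notMem hxS, hS.1]
  · intro f hf hfk
    rw [Finset.mem_powerset] at hf
    obtain ⟨w, hwc, hwf, hfw⟩ := eq_erase_of_subset_card hf
      (by rw [Finset.card_insert_of_notMem hxS, hS.1]) hfk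
    rw [Finset.mem_insert] at hwc
    rcases hwc with rfl | hwS
    · rw [hfw, Finset.erase_insert hxS]
      exact mem_Eset.mpr ⟨hS.1, Or.inl hS⟩
    · have hwx : w ≠ x := fun h => absurd (hS.2.1 w hwS) (by rw [h] at *; omega)
      have hfw' : f = insert x (S.erase w) := by
        rw [hfw, Finset.erase_insert_of_ne hwx.symm]
      have hxSw : x ∉ S.erase w := fun h => hxS (Finset.mem_of_mem_erase h)
      refine mem_Eset.mpr ⟨hfk, Or.inr ⟨x, ?_, hx, ?_, S, hS, ?_⟩⟩
      · rw [hfw']; exact Finset.mem_insert_self x _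
      · intro v hv
        rw [hfw', Finset.erase_insert hxSw] at hv
        exact hS.2.1 v (Finset.mem_of_mem_erase hv)
      · rw [hfw', Finset.erase_insert hxSw]
        exact Finset.erase_subset _ _

lemma isKGraph_Eset {n k b : ℕ} : IsKGraph n k (Eset n k b) :=
  fun _ he => (mem_Eset.mp he).1

lemma wellCovered_Eset {n k b : ℕ} (hk : 1 ≤ k) (hbn : b < n) :
    WellCovered n k (Eset n k b) := by
  intro e he
  obtain ⟨hek, hcase⟩ := mem_Eset.mp he
  have hn : 0 < n := lt_of_le_of_lt (Nat.zero_le b) hbn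
  rcases hcase with hF | ⟨x, hxe, hxb, hlt, S, hS, hsub⟩
  · refine ⟨insert (⟨b, hbn⟩ : Fin n) e, hyperclique_insert hk hF le_rfl,
      Finset.subset_insert _ _⟩
  · refine ⟨insert x S, hyperclique_insert hk hS hxb, ?_⟩
    intro v hv
    rcases eq_or_ne v x with rfl | hvx
    · exact Finset.mem_insert_self _ _
    · exact Finset.mem_insert_of_mem (hsub (Finset.mem_erase.mpr ⟨hvx, hv⟩))

/-- Structure of cliques: exactly one vertex outside `B`, rest an `F`-edge. -/
lemma clique_structure {n k b : ℕ} (hk : 2 ≤ k) {c : Finset (Fin n)}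
    (hc : c.card = k + 1) (hsub : ∀ f ⊆ c, f.card = k → f ∈ Eset n k b) :
    ∃ x ∈ c, b ≤ x.val ∧ Fpred n k b (c.erase x) ∧ ∀ y ∈ c, b ≤ y.val → y = x := by
  classical
  set Ac := c.filter (fun v => b ≤ v.val) with hAc
  have hAsub : Ac ⊆ c := Finset.filter_subset _ _
  -- first: Ac.card ≤ 1
  have h1 : Ac.card ≤ 1 := by
    by_contra hge
    push_neg at hge
    obtain ⟨x, hx, y, hy, hxy⟩ := Finset.one_lt_card.mp hge
    have hxc := hAsub hx; have hyc := hAsub hy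
    have hxb : b ≤ x.val := (Finset.mem_filter.mp hx).2
    have hyb : b ≤ y.val := (Finset.mem_filter.mp hy).2
    -- pick z in c distinct from x and y
    have hcard2 : ((c.erase x).erase y).Nonempty := by
      rw [← Finset.card_pos, Finset.card_erase_of_mem (Finset.mem_erase.mpr ⟨hxy.symm, hyc⟩),
        Finset.card_erase_of_mem hxc, hc]; omega
    obtain ⟨z, hz⟩ := hcard2
    have hzy : z ≠ y := (Finset.mem_erase.mp hz).1
    have hzx : z ≠ x := (Finset.mem_erase.mp (Finset.mem_of_mem_erase hz)).1
    have hzc : z ∈ c := Finset.mem_of_mem_erase (Finset.mem_of_mem_erase hz)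
    have hf : c.erase z ∈ Eset n k b := hsub _ (Finset.erase_subset _ _)
      (by rw [Finset.card_erase_of_mem hzc, hc]; omega)
    have hxf : x ∈ c.erase z := Finset.mem_erase.mpr ⟨hzx.symm, hxc⟩
    have hyf : y ∈ c.erase z := Finset.mem_erase.mpr ⟨hzy.symm, hyc⟩
    obtain ⟨-, hcase⟩ := mem_Eset.mp hf
    rcases hcase with hF | ⟨x', hx', hx'b, hlt, -⟩
    · exact absurd (hF.2.1 x hxf) (by omega)
    · rcases eq_or_ne x x' with rfl | hne
      · exact absurd (hlt y (Finset.mem_erase.mpr ⟨fun h => hxy h.symm, hyf⟩)) (by omega)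
      · exact absurd (hlt x (Finset.mem_erase.mpr ⟨hne, hxf⟩)) (by omega)
  -- second: Ac nonempty
  have h0 : Ac.Nonempty := by
    by_contra hemp
    rw [Finset.not_nonempty_iff_eq_empty, Finset.filter_eq_empty_iff] at hemp
    push_neg at hemp
    -- all elements of c are < b; get two distinct k-subsets in F sharing k-1 elements
    obtain ⟨x, hxc⟩ : c.Nonempty := by rw [← Finset.card_pos, hc]; omega
    obtain ⟨y, hy⟩ : (c.erase x).Nonempty := by
      rw [← Finset.card_pos, Finset.card_erase_of_mem hxc, hc]; omega
    have hyx : y ≠ x := (Finset.mem_erase.mp hy).1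
    have hyc : y ∈ c := Finset.mem_of_mem_erase hy
    have hSx : c.erase x ∈ Eset n k b := hsub _ (Finset.erase_subset _ _)
      (by rw [Finset.card_erase_of_mem hxc, hc]; omega)
    have hSy : c.erase y ∈ Eset n k b := hsub _ (Finset.erase_subset _ _)
      (by rw [Finset.card_erase_of_mem hyc, hc]; omega)
    have hFx : Fpred n k b (c.erase x) := by
      obtain ⟨-, hcase⟩ := mem_Eset.mp hSx
      rcases hcase with hF | ⟨x', hx', hx'b, -⟩
      · exact hF
      · exact absurd (hemp (Finset.mem_of_mem_erase hx')) (by omega)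
    have hFy : Fpred n k b (c.erase y) := by
      obtain ⟨-, hcase⟩ := mem_Eset.mp hSy
      rcases hcase with hF | ⟨x', hx', hx'b, -⟩
      · exact hF
      · exact absurd (hemp (Finset.mem_of_mem_erase hx')) (by omega)
    have hU1 : (c.erase x).erase y ⊆ c.erase x := Finset.erase_subset _ _
    have hU2 : (c.erase x).erase y ⊆ c.erase y := by
      rw [Finset.erase_right_comm]; exact Finset.erase_subset _ _
    have hUcard : ((c.erase x).erase y).card + 1 = k := by
      rw [Finset.card_erase_of_mem (Finset.mem_erase.mpr ⟨hyx, hyc⟩),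
        Finset.card_erase_of_mem hxc, hc]; omega
    have := uniqueExt hFx hFy hU1 hU2 hUcard
    have : y ∈ c.erase y := this ▸ Finset.mem_erase.mpr ⟨hyx, hyc⟩
    exact (Finset.mem_erase.mp this).1 rfl
  obtain ⟨x, hx⟩ := h0
  have hxc : x ∈ c := hAsub hx
  have hxb : b ≤ x.val := (Finset.mem_filter.mp hx).2
  have huniq : ∀ y ∈ c, b ≤ y.val → y = x := by
    intro y hyc hyb
    have hy : y ∈ Ac := Finset.mem_filter.mpr ⟨hyc, hyb⟩
    by_contra hne
    have : 1 < Ac.card := Finset.one_lt_card.mpr ⟨y, hy, x, hx, hne⟩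
    omega
  refine ⟨x, hxc, hxb, ?_, huniq⟩
  have hEe : c.erase x ∈ Eset n k b := hsub _ (Finset.erase_subset _ _)
    (by rw [Finset.card_erase_of_mem hxc, hc]; omega)
  obtain ⟨-, hcase⟩ := mem_Eset.mp hEe
  rcases hcase with hF | ⟨x', hx', hx'b, -⟩
  · exact hF
  · have : x' = x := huniq x' (Finset.mem_of_mem_erase hx') hx'b
    exact absurd ((Finset.mem_erase.mp hx').1 this) (fun h => h)

lemma cardB {n b : ℕ} (hbn : b ≤ n) :
    (Finset.univ.filter fun v : Fin n => v.val < b).card = b := by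
  classical
  have : (Finset.univ.filter fun v : Fin n => v.val < b) =
      Finset.univ.map ⟨Fin.castLE hbn, Fin.castLE_injective hbn⟩ := by
    ext v
    simp only [Finset.mem_filter, Finset.mem_univ, true_and, Finset.mem_map,
      Function.Embedding.coeFn_mk]
    constructor
    · intro hv; exact ⟨⟨v.val, hv⟩, rfl⟩
    · rintro ⟨i, rfl⟩; exact i.isLt
  rw [this, Finset.card_map, Finset.card_univ, Fintype.card_fin]

lemma cardA {n b : ℕ} (hbn : b ≤ n) :
    (Finset.univ.filter fun v : Fin n => b ≤ v.val).card = n - b := by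
  classical
  have h := Finset.card_filter_add_card_filter_not
    (s := (Finset.univ : Finset (Fin n))) (p := fun v : Fin n => v.val < b)
  rw [cardB hbn, Finset.card_univ, Fintype.card_fin] at h
  have : (Finset.univ.filter fun v : Fin n => ¬ v.val < b) =
      (Finset.univ.filter fun v : Fin n => b ≤ v.val) := by
    apply Finset.filter_congr; intro v _; simp [not_lt]
  rw [this] at h
  omega

lemma cliqueCount_le {n k b : ℕ} (hk : 2 ≤ k) (hbn : b ≤ n) :
    cliqueCount n k (Eset n k b) ≤ (n - b) * (Fset n k b).card := by
  classical
  unfold cliqueCount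
  set t := ((Finset.univ.filter fun v : Fin n => b ≤ v.val).image
      fun x => ({x} : Finset (Fin n))) ×ˢ Fset n k b with ht
  have hcardt : t.card = (n - b) * (Fset n k b).card := by
    rw [ht, Finset.card_product, Finset.card_image_of_injective _
      (fun a b h => Finset.singleton_injective h), cardA hbn]
  rw [← hcardt]
  apply Finset.card_le_card_of_injOn
    (fun c => (c.filter fun v => b ≤ v.val, c.filter fun v => ¬ b ≤ v.val))
  · intro c hc
    rw [Finset.mem_coe, Finset.mem_filter] at hc
    obtain ⟨-, hcard, hsub⟩ := hc
    obtain ⟨x, hxc, hxb, hF, huniq⟩ := clique_structure hk hcard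
      (fun f hf hfk => hsub f (Finset.mem_powerset.mpr hf) hfk)
    have h1 : c.filter (fun v => b ≤ v.val) = {x} := by
      ext v
      simp only [Finset.mem_filter, Finset.mem_singleton]
      constructor
      · rintro ⟨hvc, hvb⟩; exact huniq v hvc hvb
      · rintro rfl; exact ⟨hxc, hxb⟩
    have h2 : c.filter (fun v => ¬ b ≤ v.val) = c.erase x := by
      ext v
      simp only [Finset.mem_filter, Finset.mem_erase, not_le]
      constructor
      · rintro ⟨hvc, hvb⟩; exact ⟨fun h => by rw [h] at hvb; omega, hvc⟩
      · rintro ⟨hvx, hvc⟩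
        refine ⟨hvc, ?_⟩
        by_contra h
        exact hvx (huniq v hvc (by omega))
    rw [Finset.mem_coe, Finset.mem_product]
    dsimp only
    constructor
    · rw [h1]
      exact Finset.mem_image.mpr ⟨x, Finset.mem_filter.mpr ⟨Finset.mem_univ x, hxb⟩, rfl⟩
    · rw [h2]; exact mem_Fset.mpr hF
  · intro c₁ h₁ c₂ h₂ heq
    have e1 : c₁.filter (fun v => b ≤ v.val) = c₂.filter (fun v => b ≤ v.val) :=
      congrArg Prod.fst heq
    have e2 : c₁.filter (fun v => ¬ b ≤ v.val) = c₂.filter (fun v => ¬ b ≤ v.val) :=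
      congrArg Prod.snd heq
    have := Finset.filter_union_filter_not_eq (fun v : Fin n => b ≤ v.val) c₁
    rw [← this, e1, e2, Finset.filter_union_filter_not_eq]

lemma Eset_card_ge {n k b : ℕ} (hk : 2 ≤ k) (hbn : b ≤ n) :
    (k * (n - b) + 1) * (Fset n k b).card ≤ (Eset n k b).card := by
  classical
  set A := (Finset.univ.filter fun v : Fin n => b ≤ v.val) with hA
  set P := (Fset n k b).sigma (fun S => S ×ˢ A) with hP
  have hcardP : P.card = (Fset n k b).card * (k * (n - b)) := by
    rw [hP, Finset.card_sigma]
    rw [Finset.sum_congr rfl (fun S hS => ?_), Finset.sum_const, smul_eq_mul]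
    rw [Finset.card_product, (mem_Fset.mp hS).1, cardA hbn]
  -- the map into edges with an outside vertex
  have key : P.card ≤ ((Eset n k b).filter fun T => ∃ x ∈ T, b ≤ x.val).card := by
    apply Finset.card_le_card_of_injOn (fun p => insert p.2.2 (p.1.erase p.2.1))
    · rintro ⟨S, s, x⟩ hp
      rw [hP, Finset.mem_coe, Finset.mem_sigma, Finset.mem_product] at hp
      obtain ⟨hSF, hsS, hxA⟩ := hp
      have hS := mem_Fset.mp hSF
      have hxb : b ≤ x.val := (Finset.mem_filter.mp hxA).2
      have hxS' : x ∉ S.erase s := fun h =>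
        absurd (hS.2.1 x (Finset.mem_of_mem_erase h)) (by omega)
      have hcardT : (insert x (S.erase s)).card = k := by
        rw [Finset.card_insert_of_notMem hxS', Finset.card_erase_of_mem hsS, hS.1]
        omega
      refine Finset.mem_filter.mpr ⟨mem_Eset.mpr ⟨hcardT, Or.inr
        ⟨x, Finset.mem_insert_self _ _, hxb, ?_, S, hS, ?_⟩⟩,
        x, Finset.mem_insert_self _ _, hxb⟩
      · intro v hv
        rw [Finset.erase_insert hxS'] at hv
        exact hS.2.1 v (Finset.mem_of_mem_erase hv)
      · rw [Finset.erase_insert hxS']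
        exact Finset.erase_subset _ _
    · rintro ⟨S, s, x⟩ hp ⟨S', s', x'⟩ hq heq
      have hp2 : (⟨S, (s, x)⟩ : (_ : Finset (Fin n)) × Fin n × Fin n) ∈ P := hp
      have hq2 : (⟨S', (s', x')⟩ : (_ : Finset (Fin n)) × Fin n × Fin n) ∈ P := hq
      rw [hP, Finset.mem_sigma, Finset.mem_product] at hp2 hq2
      obtain ⟨hSF, hsS, hxA⟩ := hp2
      obtain ⟨hSF', hsS', hxA'⟩ := hq2
      have hS := mem_Fset.mp hSF
      have hS' := mem_Fset.mp hSF'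
      have hxb : b ≤ x.val := (Finset.mem_filter.mp hxA).2
      have hx'b : b ≤ x'.val := (Finset.mem_filter.mp hxA').2
      have hxS' : x ∉ S.erase s := fun h =>
        absurd (hS.2.1 x (Finset.mem_of_mem_erase h)) (by omega)
      have hx'S' : x' ∉ S'.erase s' := fun h =>
        absurd (hS'.2.1 x' (Finset.mem_of_mem_erase h)) (by omega)
      simp only at heq
      have hxx : x' = x := by
        have hmem : x' ∈ insert x (S.erase s) := by
          rw [heq]; exact Finset.mem_insert_self _ _
        rcases Finset.mem_insert.mp hmem with h | h
        · exact h
        · exact absurd (hS.2.1 x' (Finset.mem_of_mem_erase h)) (by omega)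
      subst hxx
      have hUeq : S.erase s = S'.erase s' := by
        have := congrArg (fun T => Finset.erase T x') heq
        simpa [Finset.erase_insert hxS', Finset.erase_insert hx'S'] using this
      have hSS : S = S' := by
        refine uniqueExt hS hS' (Finset.erase_subset _ _) ?_
          (by rw [Finset.card_erase_of_mem hsS, hS.1]; omega)
        rw [hUeq]; exact Finset.erase_subset _ _
      subst hSS
      have hss : s = s' := by
        by_contra hne
        have : s ∈ S.erase s' := Finset.mem_erase.mpr ⟨hne, hsS⟩
        rw [← hUeq] at this
        exact (Finset.mem_erase.mp this).1 rfl
      subst hss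
      rfl
  have hFsub : Fset n k b ⊆ (Eset n k b).filter fun T => ¬ ∃ x ∈ T, b ≤ x.val := by
    intro S hS
    have h := mem_Fset.mp hS
    refine Finset.mem_filter.mpr ⟨mem_Eset.mpr ⟨h.1, Or.inl h⟩, ?_⟩
    rintro ⟨x, hxS, hxb⟩
    exact absurd (h.2.1 x hxS) (by omega)
  have hsplit := Finset.card_filter_add_card_filter_not
    (s := Eset n k b) (p := fun T => ∃ x ∈ T, b ≤ x.val)
  have hF2 : (Fset n k b).card ≤ ((Eset n k b).filter fun T => ¬ ∃ x ∈ T, b ≤ x.val).card :=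
    Finset.card_le_card hFsub
  have := key
  rw [hcardP] at this
  nlinarith [this, hF2, hsplit]

open scoped Classical in
noncomputable def Nr (n k b r : ℕ) : ℕ :=
  (Finset.univ.filter fun S : Finset (Fin n) =>
    S.card = k ∧ (∀ v ∈ S, v.val < b) ∧ (∑ v ∈ S, v.val) % b = r).card

def tmap (n b : ℕ) (hb : 0 < b) (hbn : b ≤ n) : Fin n → Fin n := fun v =>
  if v.val < b then ⟨(v.val + 1) % b, lt_of_lt_of_le (Nat.mod_lt _ hb) hbn⟩ else v

lemma mod_succ_inj {b v w : ℕ} (hv : v < b) (hw : w < b)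
    (h : (v + 1) % b = (w + 1) % b) : v = w := by
  have h2 : v ≡ w [MOD b] :=
    Nat.ModEq.add_right_cancel (Nat.ModEq.refl 1) (show _ ≡ _ [MOD b] from h)
  unfold Nat.ModEq at h2
  rwa [Nat.mod_eq_of_lt hv, Nat.mod_eq_of_lt hw] at h2

lemma tmap_inj {n b : ℕ} (hb : 0 < b) (hbn : b ≤ n) :
    Function.Injective (tmap n b hb hbn) := by
  intro v w h
  unfold tmap at h
  split_ifs at h with h1 h2 h2
  · exact Fin.ext (mod_succ_inj h1 h2 (congrArg Fin.val h))
  · exfalso; apply h2; rw [← h]; exact Nat.mod_lt _ hb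
  · exfalso; apply h1; rw [h]; exact Nat.mod_lt _ hb
  · exact h

lemma tmap_val {n b : ℕ} (hb : 0 < b) (hbn : b ≤ n) {v : Fin n} (hv : v.val < b) :
    (tmap n b hb hbn v).val = (v.val + 1) % b := by
  unfold tmap; rw [if_pos hv]

lemma Nr_step {n k b : ℕ} (hb : 0 < b) (hbn : b ≤ n) (r : ℕ) (hr : r < b) :
    Nr n k b r ≤ Nr n k b ((r + k) % b) := by
  classical
  unfold Nr
  apply Finset.card_le_card_of_injOn (fun S => S.image (tmap n b hb hbn))
  · intro S hS
    rw [Finset.mem_coe, Finset.mem_filter] at hS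
    obtain ⟨-, hcard, hB, hsum⟩ := hS
    refine Finset.mem_filter.mpr ⟨Finset.mem_univ _, ?_, ?_, ?_⟩
    · rw [Finset.card_image_of_injective _ (tmap_inj hb hbn), hcard]
    · intro w hw
      obtain ⟨v, hv, rfl⟩ := Finset.mem_image.mp hw
      rw [tmap_val hb hbn (hB v hv)]
      exact Nat.mod_lt _ hb
    · rw [Finset.sum_image (fun a _ c _ h => tmap_inj hb hbn h)]
      have e1 : ∑ v ∈ S, (tmap n b hb hbn v).val = ∑ v ∈ S, (v.val + 1) % b :=
        Finset.sum_congr rfl (fun v hv => tmap_val hb hbn (hB v hv))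
      rw [e1, ← Finset.sum_nat_mod]
      have e2 : ∑ v ∈ S, (v.val + 1) = (∑ v ∈ S, v.val) + k := by
        rw [Finset.sum_add_distrib, Finset.sum_const, hcard, smul_eq_mul, mul_one]
      rw [e2, Nat.add_mod, hsum]
      conv_rhs => rw [Nat.add_mod, Nat.mod_eq_of_lt hr]
  · exact fun S₁ _ S₂ _ h => Finset.image_injective (tmap_inj hb hbn) h

lemma Nr_eq_zero {n k b : ℕ} (hb : 0 < b) (hbn : b ≤ n) (hco : Nat.Coprime k b)
    {r : ℕ} (hr : r < b) : Nr n k b r = Nr n k b 0 := by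
  classical
  set g : ℕ → ℕ := fun j => Nr n k b ((j * k) % b) with hg
  have hmono : Monotone g := by
    apply monotone_nat_of_le_succ
    intro j
    have step := Nr_step (n := n) (k := k) hb hbn ((j * k) % b) (Nat.mod_lt _ hb)
    have harith : ((j * k) % b + k) % b = ((j + 1) * k) % b := by
      rw [Nat.mod_add_mod, add_mul, one_mul]
    rw [harith] at step
    exact step
  have hg0 : g 0 = Nr n k b 0 := by simp [hg]
  have hgb : g b = Nr n k b 0 := by simp [hg, Nat.mul_mod_right]
  -- find j ≤ b with (j*k) % b = r
  haveI : NeZero b := ⟨hb.ne'⟩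
  set u : (ZMod b)ˣ := ZMod.unitOfCoprime k hco with hu
  set j := ((r : ZMod b) * ((u⁻¹ : (ZMod b)ˣ) : ZMod b)).val with hj
  have hjb : j ≤ b := le_of_lt (ZMod.val_lt _)
  have hcast : ((j * k : ℕ) : ZMod b) = (r : ZMod b) := by
    push_cast
    rw [hj, ZMod.natCast_val, ZMod.cast_id]
    have hk : (k : ZMod b) = (u : ZMod b) := (ZMod.coe_unitOfCoprime k hco).symm
    rw [hk, mul_assoc, ← Units.val_mul, inv_mul_cancel, Units.val_one, mul_one]
  have hjr : (j * k) % b = r := by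
    have := congrArg ZMod.val hcast
    rwa [ZMod.val_natCast, ZMod.val_natCast, Nat.mod_eq_of_lt hr] at this
  have h1 : g 0 ≤ g j := hmono (Nat.zero_le j)
  have h2 : g j ≤ g b := hmono hjb
  have : g j = Nr n k b r := by rw [hg]; simp only; rw [hjr]
  omega

lemma sum_Nr {n k b : ℕ} (hb : 0 < b) (hbn : b ≤ n) :
    ∑ r ∈ Finset.range b, Nr n k b r = Nat.choose b k := by
  classical
  set s := Finset.univ.filter
    (fun S : Finset (Fin n) => S.card = k ∧ ∀ v ∈ S, v.val < b) with hs
  have hcount : s.card = Nat.choose b k := by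
    have hseq : s = (Finset.univ.filter fun v : Fin n => v.val < b).powersetCard k := by
      ext S
      simp only [hs, Finset.mem_filter, Finset.mem_univ, true_and,
        Finset.mem_powersetCard, Finset.subset_iff]
      tauto
    rw [hseq, Finset.card_powersetCard, cardB hbn]
  have hfib := Finset.card_eq_sum_card_fiberwise
    (f := fun S : Finset (Fin n) => (∑ v ∈ S, v.val) % b) (s := s)
    (t := Finset.range b) (fun S _ => Finset.mem_range.mpr (Nat.mod_lt _ hb))
  rw [hfib] at hcount
  rw [← hcount]
  apply Finset.sum_congr rfl
  intro r hr
  unfold Nr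
  congr 1
  ext S
  simp only [hs, Finset.mem_filter, Finset.mem_univ, true_and]
  tauto

lemma Fset_card_mul {n k b : ℕ} (hb : 0 < b) (hbn : b ≤ n) (hco : Nat.Coprime k b) :
    b * (Fset n k b).card = Nat.choose b k := by
  classical
  have h1 : (Fset n k b).card = Nr n k b 0 := by
    unfold Fset Nr
    congr 1
    ext S
    simp only [Finset.mem_filter, Finset.mem_univ, true_and, Fpred]
  have h2 : ∑ r ∈ Finset.range b, Nr n k b r = b * Nr n k b 0 := by
    rw [Finset.sum_congr rfl (fun r hr => Nr_eq_zero hb hbn hco (Finset.mem_range.mp hr))]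
    rw [Finset.sum_const, Finset.card_range, smul_eq_mul]
  rw [h1, ← sum_Nr (n := n) (k := k) hb hbn, h2]

noncomputable def bfun (α : ℝ) (k n : ℕ) : ℕ := k * ((n - ⌈α * n⌉₊ - 1) / k) + 1

lemma bfun_pos (α : ℝ) (k n : ℕ) : 0 < bfun α k n := Nat.succ_pos _

lemma bfun_coprime (α : ℝ) {k : ℕ} (hk : 2 ≤ k) (n : ℕ) : Nat.Coprime k (bfun α k n) := by
  unfold bfun
  unfold Nat.Coprime
  rw [Nat.gcd_rec, Nat.mul_add_mod, Nat.mod_eq_of_lt (by omega), Nat.gcd_one_left]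

lemma ceil_le_self {α : ℝ} (hα1 : α < 1) (hα0 : 0 < α) (n : ℕ) : ⌈α * n⌉₊ ≤ n := by
  rw [Nat.ceil_le]
  nlinarith [Nat.cast_nonneg (α := ℝ) n]

lemma ceil_pos' {α : ℝ} (hα0 : 0 < α) {n : ℕ} (hn : 1 ≤ n) : 1 ≤ ⌈α * n⌉₊ := by
  rw [Nat.one_le_ceil_iff]
  have : (1:ℝ) ≤ n := by exact_mod_cast hn
  nlinarith

lemma bfun_lt {α : ℝ} {k n : ℕ} (hk : 2 ≤ k) (hα0 : 0 < α) (hα1 : α < 1)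
    (hn : k ≤ n) : bfun α k n < n := by
  have h1 : k * ((n - ⌈α * n⌉₊ - 1) / k) ≤ n - ⌈α * n⌉₊ - 1 := Nat.mul_div_le _ _
  have h2 : 1 ≤ ⌈α * n⌉₊ := ceil_pos' hα0 (by omega)
  have h3 : ⌈α * n⌉₊ ≤ n := ceil_le_self hα1 hα0 n
  unfold bfun
  omega

/-- Natural-number bounds on `bfun`. -/
lemma bfun_nat_bounds {α : ℝ} {k : ℕ} (hk : 2 ≤ k) (n : ℕ) :
    n - ⌈α * n⌉₊ ≤ bfun α k n + k ∧ bfun α k n ≤ (n - ⌈α * n⌉₊) + 1 := by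
  have hdm := Nat.div_add_mod (n - ⌈α * n⌉₊ - 1) k
  have hmod : (n - ⌈α * n⌉₊ - 1) % k < k := Nat.mod_lt _ (by omega)
  have h1 : k * ((n - ⌈α * n⌉₊ - 1) / k) ≤ n - ⌈α * n⌉₊ - 1 := Nat.mul_div_le _ _
  unfold bfun
  omega

/-- Real bounds on `bfun`. -/
lemma bfun_real_bounds {α : ℝ} {k : ℕ} (hk : 2 ≤ k) (hα0 : 0 < α) (hα1 : α < 1)
    {n : ℕ} (hn : 1 ≤ n) :
    (1 - α) * n - (k + 1) ≤ (bfun α k n : ℝ) ∧ (bfun α k n : ℝ) ≤ (1 - α) * n + 1 := by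
  obtain ⟨hnat1, hnat2⟩ := bfun_nat_bounds (α := α) hk n
  have h3 : ⌈α * n⌉₊ ≤ n := ceil_le_self hα1 hα0 n
  have hcast : ((n - ⌈α * n⌉₊ : ℕ) : ℝ) = (n : ℝ) - (⌈α * n⌉₊ : ℝ) := by
    rw [Nat.cast_sub h3]
  have hc1 : α * n ≤ (⌈α * n⌉₊ : ℝ) := Nat.le_ceil _
  have hc2 : (⌈α * n⌉₊ : ℝ) < α * n + 1 := Nat.ceil_lt_add_one (by positivity)
  have hb1 : ((n - ⌈α * n⌉₊ : ℕ) : ℝ) ≤ (bfun α k n : ℝ) + k := by exact_mod_cast hnat1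
  have hb2 : (bfun α k n : ℝ) ≤ ((n - ⌈α * n⌉₊ : ℕ) : ℝ) + 1 := by exact_mod_cast hnat2
  rw [hcast] at hb1 hb2
  constructor <;> nlinarith

/-- The key per-`n` inequality. -/
lemma construction_ineq {α : ℝ} {k n : ℕ} (hk : 2 ≤ k) (hα0 : 0 < α) (hα1 : α < 1)
    (hn : k ≤ n) :
    ((Eset n k (bfun α k n)).card : ℝ) - (cliqueCount n k (Eset n k (bfun α k n)) : ℝ) ≥
      (((k : ℝ) - 1) * ((n : ℝ) - (bfun α k n : ℝ)) + 1) * ((Fset n k (bfun α k n)).card : ℝ) := by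
  set b := bfun α k n with hbdef
  have hbn : b < n := bfun_lt hk hα0 hα1 hn
  have he := Eset_card_ge (n := n) (k := k) (b := b) hk (le_of_lt hbn)
  have hc := cliqueCount_le (n := n) (k := k) (b := b) hk (le_of_lt hbn)
  have he' : (((k * (n - b) + 1) * (Fset n k b).card : ℕ) : ℝ) ≤ ((Eset n k b).card : ℝ) :=
    Nat.cast_le.mpr he
  have hc' : ((cliqueCount n k (Eset n k b)) : ℝ) ≤ (((n - b) * (Fset n k b).card : ℕ) : ℝ) :=
    Nat.cast_le.mpr hc
  have hsub : ((n - b : ℕ) : ℝ) = (n : ℝ) - (b : ℝ) := Nat.cast_sub (le_of_lt hbn)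
  push_cast [hsub] at he' hc' ⊢
  nlinarith [Nat.cast_nonneg (α := ℝ) (Fset n k b).card]

/-- the error term -/
noncomputable def ffun (α : ℝ) (k n : ℕ) : ℝ :=
  if k ≤ n then
    ((((k : ℝ) - 1) * ((n : ℝ) - (bfun α k n : ℝ)) + 1) * ((Fset n k (bfun α k n)).card : ℝ))
        / (n.choose k : ℝ) - ((k : ℝ) - 1) * α * (1 - α) ^ (k - 1)
  else -(((k : ℝ) - 1) * α * (1 - α) ^ (k - 1))

lemma cast_choose_eq {X k : ℕ} (h : k ≤ X) :
    (X.choose k : ℝ) = (∏ i ∈ Finset.range k, ((X : ℝ) - i)) / (k.factorial : ℝ) := by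
  have hd := Nat.descFactorial_eq_factorial_mul_choose X k
  have hcast : ((X.descFactorial k : ℕ) : ℝ) = ∏ i ∈ Finset.range k, ((X : ℝ) - i) := by
    rw [Nat.descFactorial_eq_prod_range, Nat.cast_prod]
    apply Finset.prod_congr rfl
    intro i hi
    rw [Nat.cast_sub (le_of_lt (lt_of_lt_of_le (Finset.mem_range.mp hi) h))]
  have hfac : (k.factorial : ℝ) ≠ 0 := by positivity
  rw [eq_div_iff hfac, ← hcast]
  have hnat : X.choose k * k.factorial = X.descFactorial k := by rw [hd, Nat.mul_comm]
  exact_mod_cast hnat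

lemma ffun_tendsto {k : ℕ} (hk : 2 ≤ k) {α : ℝ} (hα0 : 0 < α) (hα1 : α < 1) :
    Tendsto (ffun α k) atTop (nhds 0) := by
  set C : ℝ := ((k : ℝ) - 1) * α * (1 - α) ^ (k - 1) with hC
  have h1a : (0:ℝ) < 1 - α := by linarith
  -- step C : b / n → 1 - α
  have hratio : Tendsto (fun n : ℕ => (bfun α k n : ℝ) / n) atTop (nhds (1 - α)) := by
    have hlow : Tendsto (fun n : ℕ => (1 - α) - ((k : ℝ) + 1) / n) atTop (nhds (1 - α)) := by
      have := (tendsto_const_nhds (x := (1 - α)) (f := atTop (α := ℕ))).sub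
        (tendsto_const_div_atTop_nhds_zero_nat ((k : ℝ) + 1))
      simpa using this
    have hhigh : Tendsto (fun n : ℕ => (1 - α) + 1 / n) atTop (nhds (1 - α)) := by
      have := (tendsto_const_nhds (x := (1 - α)) (f := atTop (α := ℕ))).add
        (tendsto_const_div_atTop_nhds_zero_nat 1)
      simpa using this
    apply tendsto_of_tendsto_of_tendsto_of_le_of_le' hlow hhigh
    · filter_upwards [eventually_ge_atTop 1] with n hn
      have hn0 : (0:ℝ) < n := by exact_mod_cast hn
      obtain ⟨hb1, hb2⟩ := bfun_real_bounds hk hα0 hα1 hn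
      rw [show (1 - α) - ((k : ℝ) + 1) / n = ((1 - α) * n - ((k : ℝ) + 1)) / n by
        field_simp]
      exact (div_le_div_iff_of_pos_right hn0).mpr hb1
    · filter_upwards [eventually_ge_atTop 1] with n hn
      have hn0 : (0:ℝ) < n := by exact_mod_cast hn
      obtain ⟨hb1, hb2⟩ := bfun_real_bounds hk hα0 hα1 hn
      rw [show (1 - α) + 1 / n = ((1 - α) * n + 1) / n by field_simp]
      exact (div_le_div_iff_of_pos_right hn0).mpr hb2
  -- step D : b → ∞, eventually k ≤ b
  have hbtop : Tendsto (fun n : ℕ => (bfun α k n : ℝ)) atTop atTop := by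
    have hle : (fun n : ℕ => (1 - α) * n - ((k : ℝ) + 1)) ≤ᶠ[atTop]
        fun n : ℕ => (bfun α k n : ℝ) := by
      filter_upwards [eventually_ge_atTop 1] with n hn
      exact (bfun_real_bounds hk hα0 hα1 hn).1
    have h1 : Tendsto (fun n : ℕ => (1 - α) * (n : ℝ)) atTop atTop :=
      Tendsto.const_mul_atTop h1a tendsto_natCast_atTop_atTop
    have h2 : Tendsto (fun n : ℕ => (1 - α) * (n:ℝ) - ((k : ℝ) + 1)) atTop atTop := by
      simpa [sub_eq_add_neg] using tendsto_atTop_add_const_right atTop (-((k : ℝ) + 1)) h1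
    exact tendsto_atTop_mono' atTop hle h2
  have hev_bk : ∀ᶠ n in atTop, k ≤ bfun α k n := by
    filter_upwards [hbtop.eventually_ge_atTop (k : ℝ)] with n hn
    exact_mod_cast hn
  -- factor limits
  have hfac : ∀ i ∈ Finset.range k,
      Tendsto (fun n : ℕ => ((bfun α k n : ℝ) - i) / ((n : ℝ) - i)) atTop (nhds (1 - α)) := by
    intro i hi
    have hnum : Tendsto (fun n : ℕ => (bfun α k n : ℝ) / n - (i : ℝ) / n) atTop
        (nhds (1 - α)) := by
      have := hratio.sub (tendsto_const_div_atTop_nhds_zero_nat (i : ℝ))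
      simpa using this
    have hden : Tendsto (fun n : ℕ => 1 - (i : ℝ) / n) atTop (nhds 1) := by
      have := (tendsto_const_nhds (x := (1:ℝ)) (f := atTop (α := ℕ))).sub
        (tendsto_const_div_atTop_nhds_zero_nat (i : ℝ))
      simpa using this
    have hq := hnum.div hden one_ne_zero
    rw [div_one] at hq
    apply hq.congr'
    filter_upwards [eventually_gt_atTop i] with n hn
    have hin : (i:ℝ) < n := by exact_mod_cast hn
    have hipos : (0:ℝ) ≤ (i:ℝ) := by positivity
    have hn0 : ((n : ℝ)) ≠ 0 := by linarith
    have hni : ((n : ℝ)) - i ≠ 0 := by linarith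
    show ((bfun α k n : ℝ) / n - (i:ℝ) / n) / (1 - (i:ℝ) / n) = _
    rw [← sub_div, one_sub_div hn0, div_div_div_cancel_right₀ hn0]
  -- product limit
  have hprod : Tendsto (fun n : ℕ => ∏ i ∈ Finset.range k, ((bfun α k n : ℝ) - i) / ((n : ℝ) - i))
      atTop (nhds ((1 - α) ^ k)) := by
    have := tendsto_finset_prod (Finset.range k) hfac
    simpa using this
  -- A/n limit
  have hA : Tendsto (fun n : ℕ => (((k : ℝ) - 1) * ((n : ℝ) - (bfun α k n : ℝ)) + 1) / n)
      atTop (nhds (((k : ℝ) - 1) * α)) := by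
    have hmain : Tendsto (fun n : ℕ => ((k : ℝ) - 1) * (1 - (bfun α k n : ℝ) / n) + 1 / n)
        atTop (nhds (((k : ℝ) - 1) * α)) := by
      have h1 := (tendsto_const_nhds (x := ((k:ℝ) - 1)) (f := atTop (α := ℕ))).mul
        ((tendsto_const_nhds (x := (1:ℝ)) (f := atTop (α := ℕ))).sub hratio)
      have h2 := h1.add (tendsto_const_div_atTop_nhds_zero_nat 1)
      have : ((k:ℝ) - 1) * (1 - (1 - α)) + 0 = ((k:ℝ) - 1) * α := by ring
      rwa [this] at h2
    apply hmain.congr'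
    filter_upwards [eventually_ge_atTop 1] with n hn
    have hn0 : ((n:ℝ)) ≠ 0 := by
      have : (0:ℝ) < n := by exact_mod_cast hn
      linarith
    field_simp
  -- n/b limit
  have hnb : Tendsto (fun n : ℕ => (n : ℝ) / (bfun α k n : ℝ)) atTop (nhds (1 - α)⁻¹) := by
    have := hratio.inv₀ (ne_of_gt h1a)
    simpa [inv_div] using this
  -- g limit
  set g : ℕ → ℝ := fun n =>
    ((((k : ℝ) - 1) * ((n : ℝ) - (bfun α k n : ℝ)) + 1) * ((Fset n k (bfun α k n)).card : ℝ))
      / (n.choose k : ℝ) with hg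
  have hgform : ∀ᶠ n in atTop, g n =
      ((((k : ℝ) - 1) * ((n : ℝ) - (bfun α k n : ℝ)) + 1) / n) * ((n : ℝ) / (bfun α k n : ℝ)) *
        ∏ i ∈ Finset.range k, ((bfun α k n : ℝ) - i) / ((n : ℝ) - i) := by
    filter_upwards [eventually_ge_atTop k, hev_bk, eventually_ge_atTop 1] with n hn hbk hn1
    have hbpos : 0 < bfun α k n := bfun_pos α k n
    have hblt : bfun α k n < n := bfun_lt hk hα0 hα1 hn
    have hbne : ((bfun α k n : ℝ)) ≠ 0 := by positivity
    have hNb : (bfun α k n : ℝ) * ((Fset n k (bfun α k n)).card : ℝ)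
        = ((bfun α k n).choose k : ℝ) := by
      exact_mod_cast congrArg (Nat.cast : ℕ → ℝ)
        (Fset_card_mul hbpos (le_of_lt hblt) (bfun_coprime α hk n))
    have hN : ((Fset n k (bfun α k n)).card : ℝ) = ((bfun α k n).choose k : ℝ) / (bfun α k n : ℝ) := by
      rw [eq_div_iff hbne, mul_comm]
      exact hNb
    have hn0 : ((n:ℝ)) ≠ 0 := by
      have : (0:ℝ) < n := by exact_mod_cast hn1
      linarith
    have hfacne : ((k.factorial : ℝ)) ≠ 0 := by positivity
    have hPn : (∏ i ∈ Finset.range k, ((n : ℝ) - i)) ≠ 0 := by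
      apply Finset.prod_ne_zero_iff.mpr
      intro i hi
      have hik : i < k := Finset.mem_range.mp hi
      have : (i : ℝ) < n := by
        have : i < n := lt_of_lt_of_le hik hn
        exact_mod_cast this
      linarith
    rw [hg]
    simp only
    rw [hN, cast_choose_eq hbk, cast_choose_eq hn, Finset.prod_div_distrib]
    field_simp
  have hglim0 := (hA.mul hnb).mul hprod
  have hval : ((k : ℝ) - 1) * α * (1 - α)⁻¹ * (1 - α) ^ k = C := by
    rw [hC]
    rw [show (1 - α) ^ k = (1 - α) ^ ((k - 1) + 1) by rw [Nat.sub_add_cancel (by omega : 1 ≤ k)]]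
    rw [pow_succ]
    field_simp
  rw [hval] at hglim0
  have hgeq : g =ᶠ[atTop] _ := hgform
  have hglim : Tendsto g atTop (nhds C) := Tendsto.congr' hgeq.symm hglim0
  -- conclude
  have hfin := hglim.sub_const C
  rw [sub_self] at hfin
  apply hfin.congr'
  filter_upwards [eventually_ge_atTop k] with n hn
  rw [ffun, if_pos hn]


theorem stmt15 (k : ℕ) (hk : 2 ≤ k) (α : ℝ) (hα0 : 0 < α) (hα1 : α < 1) :
    ∃ f : ℕ → ℝ, Tendsto f atTop (nhds 0) ∧
      ∀ n : ℕ, ∃ E : Finset (Finset (Fin n)),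
        IsKGraph n k E ∧ WellCovered n k E ∧
        (E.card : ℝ) - (cliqueCount n k E : ℝ) ≥
          (((k : ℝ) - 1) * α * (1 - α) ^ (k - 1) + f n) * (n.choose k : ℝ) := by
  refine ⟨ffun α k, ffun_tendsto hk hα0 hα1, fun n => ?_⟩
  by_cases hn : k ≤ n
  · refine ⟨Eset n k (bfun α k n), isKGraph_Eset,
      wellCovered_Eset (by omega) (bfun_lt hk hα0 hα1 hn), ?_⟩
    have hineq := construction_ineq hk hα0 hα1 hn
    have hch : (0:ℝ) < (n.choose k : ℝ) := by exact_mod_cast Nat.choose_pos hn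
    have hrhs : (((k : ℝ) - 1) * α * (1 - α) ^ (k - 1) + ffun α k n) * (n.choose k : ℝ)
        = (((k : ℝ) - 1) * ((n : ℝ) - (bfun α k n : ℝ)) + 1)
            * ((Fset n k (bfun α k n)).card : ℝ) := by
      rw [ffun, if_pos hn]
      field_simp
      ring
    rw [hrhs]
    exact hineq
  · refine ⟨∅, fun e he => absurd he (Finset.notMem_empty e),
      fun e he => absurd he (Finset.notMem_empty e), ?_⟩
    have h0 : cliqueCount n k (∅ : Finset (Finset (Fin n))) = 0 := by
      unfold cliqueCount
      rw [Finset.card_eq_zero, Finset.filter_eq_empty_iff]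
      rintro c - ⟨hc, hall⟩
      obtain ⟨f, hf, hfk⟩ := Finset.exists_subset_card_eq (by omega : k ≤ c.card)
      exact absurd (hall f (Finset.mem_powerset.mpr hf) hfk) (Finset.notMem_empty f)
    rw [h0, Nat.choose_eq_zero_of_lt (by omega)]
    simp
end

section
/- For every k ≥ 2, there is a bijective correspondence between well-covered k-uniform hypergraphs H on [n] and independent dominating sets D in the bipartite inclusion graph G_{k+1,k} between (k+1)-subsets and k-subsets of [n]: given H, the set D(H) consisting of the (k+1)-cliques of H together with the k-sets that are not edges of H is an independent dominating set, and |D(H)| = C(n,k) − e(H) + c(H). -/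
/-- The finset of `(k+1)`-cliques of the hypergraph with edge set `E`. -/
def cliqueFinset (n k : ℕ) (E : Finset (Finset (Fin n))) : Finset (Finset (Fin n)) :=
  Finset.univ.filter fun c => c.card = k + 1 ∧ ∀ f ∈ c.powerset, f.card = k → f ∈ E

theorem stmt16 (n k : ℕ) (hk : 2 ≤ k) (E : Finset (Finset (Fin n)))
    (hE : ∀ e ∈ E, e.card = k) (hwc : WellCovered n k E)
    (D : Finset (Finset (Fin n)))
    (hD : D = cliqueFinset n k E ∪
      (Finset.univ.filter fun s : Finset (Fin n) => s.card = k ∧ s ∉ E)) :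
    (∀ B : Finset (Fin n), (B.card = k ∨ B.card = k + 1) → B ∉ D →
      ∃ A ∈ D, A ⊂ B ∨ B ⊂ A) ∧
    (∀ A ∈ D, ∀ B ∈ D, ¬ A ⊂ B) ∧
    (D.card : ℤ) = (n.choose k : ℤ) - (E.card : ℤ) + ((cliqueFinset n k E).card : ℤ) := by
  have hmemD : ∀ A : Finset (Fin n), A ∈ D ↔
      (A.card = k + 1 ∧ ∀ f ∈ A.powerset, f.card = k → f ∈ E) ∨ (A.card = k ∧ A ∉ E) := by
    intro A
    simp [hD, cliqueFinset, Finset.mem_union, Finset.mem_filter]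
  refine ⟨?_, ?_, ?_⟩
  · intro B hB hBD
    rcases hB with hBk | hBk1
    · -- B has card k, and since B ∉ D, B ∈ E
      have hBE : B ∈ E := by
        by_contra hne
        exact hBD ((hmemD B).2 (Or.inr ⟨hBk, hne⟩))
      obtain ⟨c, ⟨hc1, hc2⟩, hsub⟩ := hwc B hBE
      refine ⟨c, (hmemD c).2 (Or.inl ⟨hc1, hc2⟩), Or.inr ?_⟩
      exact Finset.ssubset_iff_subset_ne.2 ⟨hsub, by intro h; rw [h] at hBk; omega⟩
    · -- B has card k+1, not a clique, so some k-subset is not in E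
      have : ¬ (B.card = k + 1 ∧ ∀ f ∈ B.powerset, f.card = k → f ∈ E) := by
        intro h; exact hBD ((hmemD B).2 (Or.inl h))
      push_neg at this
      obtain ⟨f, hf, hfk, hfE⟩ := this hBk1
      refine ⟨f, (hmemD f).2 (Or.inr ⟨hfk, hfE⟩), Or.inl ?_⟩
      refine Finset.ssubset_iff_subset_ne.2 ⟨Finset.mem_powerset.1 hf, ?_⟩
      intro h; rw [h] at hfk; omega
  · intro A hA B hB hAB
    have hcard : A.card < B.card := Finset.card_lt_card hAB
    rcases (hmemD A).1 hA with ⟨hA1, _⟩ | ⟨hA1, hAE⟩ <;>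
      rcases (hmemD B).1 hB with ⟨hB1, hB2⟩ | ⟨hB1, _⟩
    · omega
    · omega
    · exact hAE (hB2 A (Finset.mem_powerset.2 hAB.subset) hA1)
    · omega
  · -- cardinality
    have hdisj : Disjoint (cliqueFinset n k E)
        (Finset.univ.filter fun s : Finset (Fin n) => s.card = k ∧ s ∉ E) := by
      rw [Finset.disjoint_left]
      intro s hs hs'
      simp [cliqueFinset, Finset.mem_filter] at hs hs'
      omega
    have hfilter : (Finset.univ.filter fun s : Finset (Fin n) => s.card = k ∧ s ∉ E)
        = (Finset.univ.powersetCard k) \ E := by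
      ext s
      simp [Finset.mem_powersetCard, Finset.mem_filter, and_comm]
    have hEsub : E ⊆ Finset.univ.powersetCard k := by
      intro e he
      simp [Finset.mem_powersetCard, hE e he]
    have hcardpc : (Finset.univ.powersetCard k : Finset (Finset (Fin n))).card = n.choose k := by
      rw [Finset.card_powersetCard]
      simp
    rw [hD, Finset.card_union_of_disjoint hdisj, hfilter, Finset.card_sdiff_of_subset hEsub, hcardpc]
    have hle : E.card ≤ n.choose k := by
      rw [← hcardpc]; exact Finset.card_le_card hEsub
    push_cast [Nat.cast_sub hle]
    ring
end

section
/- Let S be a family of k-subsets of a set A such that any two distinct members of S intersect in at most k−2 elements. Define a k-uniform hypergraph H on A ∪ B (with B disjoint from A) whose edges are the members of S together with all sets X ∪ {b} where X is a (k−1)-subset of some member of S and b ∈ B. Then every edge of H is contained in a (k+1)-clique of H (H is well-covered), the number of (k+1)-cliques of H is |S|·|B|, and the number of edges is |S| + k·|S|·|B|. -/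
theorem stmt19 {V : Type*} [DecidableEq V] (k : ℕ) (hk : 2 ≤ k)
    (A B : Finset V) (hAB : Disjoint A B) (hB : B.Nonempty)
    (S : Finset (Finset V)) (hSA : ∀ X ∈ S, X ⊆ A) (hScard : ∀ X ∈ S, X.card = k)
    (hSint : ∀ X ∈ S, ∀ Y ∈ S, X ≠ Y → (X ∩ Y).card ≤ k - 2)
    (E : Finset (Finset V))
    (hE : ∀ e, e ∈ E ↔ e ∈ S ∨
      ∃ X ∈ S, ∃ Y ∈ X.powersetCard (k - 1), ∃ b ∈ B, e = insert b Y) :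
    (∀ e ∈ E, ∃ c : Finset V, c.card = k + 1 ∧ e ⊆ c ∧
      ∀ f ∈ c.powerset, f.card = k → f ∈ E) ∧
    ((A ∪ B).powerset.filter fun c =>
      c.card = k + 1 ∧ ∀ f ∈ c.powerset, f.card = k → f ∈ E).card = S.card * B.card ∧
    E.card = S.card + k * S.card * B.card := by
  classical
  have hbA : ∀ b ∈ B, ∀ s : Finset V, s ⊆ A → b ∉ s := by
    intro b hb s hs hmem
    exact (Finset.disjoint_right.mp hAB) hb (hs hmem)
  -- shadow
  set D := S.biUnion (fun X => X.powersetCard (k-1)) with hDdef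
  have hDmem : ∀ Y, Y ∈ D ↔ ∃ X ∈ S, Y ⊆ X ∧ Y.card = k-1 := by
    intro Y
    simp [hDdef, Finset.mem_biUnion, Finset.mem_powersetCard]
  have hDA : ∀ Y ∈ D, Y ⊆ A := by
    intro Y hY
    obtain ⟨X, hX, hYX, _⟩ := (hDmem Y).mp hY
    exact hYX.trans (hSA X hX)
  have hE' : ∀ e, e ∈ E ↔ e ∈ S ∨ ∃ Y ∈ D, ∃ b ∈ B, e = insert b Y := by
    intro e
    rw [hE e]
    constructor
    · rintro (h | ⟨X, hX, Y, hY, b, hb, rfl⟩)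
      · exact Or.inl h
      · rw [Finset.mem_powersetCard] at hY
        exact Or.inr ⟨Y, (hDmem Y).mpr ⟨X, hX, hY.1, hY.2⟩, b, hb, rfl⟩
    · rintro (h | ⟨Y, hY, b, hb, rfl⟩)
      · exact Or.inl h
      · obtain ⟨X, hX, hYX, hYc⟩ := (hDmem Y).mp hY
        exact Or.inr ⟨X, hX, Y, Finset.mem_powersetCard.mpr ⟨hYX, hYc⟩, b, hb, rfl⟩
  -- injectivity
  have hinj : ∀ b ∈ B, ∀ b' ∈ B, ∀ Y Y' : Finset V, Y ⊆ A → Y' ⊆ A →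
      insert b Y = insert b' Y' → b = b' ∧ Y = Y' := by
    intro b hb b' hb' Y Y' hY hY' h
    have hbb : b = b' := by
      have : b ∈ insert b' Y' := h ▸ Finset.mem_insert_self b Y
      rcases Finset.mem_insert.mp this with h1 | h1
      · exact h1
      · exact absurd h1 (hbA b hb Y' hY')
    subst hbb
    refine ⟨rfl, ?_⟩
    have h1 : Y = (insert b Y).erase b := (Finset.erase_insert (hbA b hb Y hY)).symm
    rw [h1, h, Finset.erase_insert (hbA b hb Y' hY')]
  -- edges inside A are in S
  have hedgeA : ∀ e ∈ E, e ⊆ A → e ∈ S := by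
    intro e he heA
    rcases (hE' e).mp he with h | ⟨Y, hY, b, hb, rfl⟩
    · exact h
    · exact absurd (heA (Finset.mem_insert_self b Y)) (hbA b hb A Finset.Subset.rfl)
  -- clique property
  have hclique : ∀ X ∈ S, ∀ b ∈ B, ∀ f ∈ (insert b X).powerset, f.card = k → f ∈ E := by
    intro X hX b hb f hf hcard
    rw [Finset.mem_powerset] at hf
    have hbX : b ∉ X := hbA b hb X (hSA X hX)
    by_cases hbf : b ∈ f
    · refine (hE f).mpr (Or.inr ⟨X, hX, f.erase b, ?_, b, hb, ?_⟩)
      · rw [Finset.mem_powersetCard]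
        constructor
        · intro x hx
          have hx' := hf (Finset.mem_of_mem_erase hx)
          rcases Finset.mem_insert.mp hx' with h | h
          · exact absurd h (Finset.ne_of_mem_erase hx)
          · exact h
        · rw [Finset.card_erase_of_mem hbf, hcard]
      · rw [Finset.insert_erase hbf]
    · have hfX : f ⊆ X := by
        intro x hx
        rcases Finset.mem_insert.mp (hf hx) with h | h
        · exact absurd (h ▸ hx) hbf
        · exact h
      have hfeq : f = X := Finset.eq_of_subset_of_card_le hfX
        (by rw [hcard, hScard X hX])
      exact (hE f).mpr (Or.inl (hfeq ▸ hX))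
  -- clique characterization
  have hchar : ∀ c : Finset V, c ⊆ A ∪ B → c.card = k+1 →
      (∀ f ∈ c.powerset, f.card = k → f ∈ E) → ∃ X ∈ S, ∃ b ∈ B, c = insert b X := by
    intro c hcAB hccard hcl
    have hcB1 : (c ∩ B).card = 1 := by
      rcases Nat.lt_trichotomy (c ∩ B).card 1 with h | h | h
      · -- c ∩ B = ∅ : contradiction
        exfalso
        have hcA : c ⊆ A := by
          intro x hx
          rcases Finset.mem_union.mp (hcAB hx) with h1 | h1
          · exact h1
          · exact absurd (Finset.mem_inter.mpr ⟨hx, h1⟩)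
              (by rw [Finset.card_eq_zero.mp (Nat.lt_one_iff.mp h)]; exact Finset.notMem_empty x)
        obtain ⟨a1, ha1, a2, ha2, hne⟩ := Finset.one_lt_card.mp
          (show 1 < c.card by omega)
        have hf1 : c.erase a1 ∈ S := hedgeA _
          (hcl _ (Finset.mem_powerset.mpr (Finset.erase_subset _ _))
            (by rw [Finset.card_erase_of_mem ha1, hccard]; omega))
          ((Finset.erase_subset _ _).trans hcA)
        have hf2 : c.erase a2 ∈ S := hedgeA _
          (hcl _ (Finset.mem_powerset.mpr (Finset.erase_subset _ _))
            (by rw [Finset.card_erase_of_mem ha2, hccard]; omega))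
          ((Finset.erase_subset _ _).trans hcA)
        have hne12 : c.erase a1 ≠ c.erase a2 := by
          intro h
          have : a2 ∈ c.erase a1 := Finset.mem_erase.mpr ⟨fun hh => hne hh.symm, ha2⟩
          rw [h] at this
          exact (Finset.mem_erase.mp this).1 rfl
        have hint := hSint _ hf1 _ hf2 hne12
        have heq : c.erase a1 ∩ c.erase a2 = (c.erase a1).erase a2 := by
          ext x
          simp only [Finset.mem_inter, Finset.mem_erase]
          tauto
        rw [heq, Finset.card_erase_of_mem
          (Finset.mem_erase.mpr ⟨fun hh => hne hh.symm, ha2⟩),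
          Finset.card_erase_of_mem ha1, hccard] at hint
        omega
      · exact h
      · -- two elements of B in c : contradiction
        exfalso
        obtain ⟨b1, hb1, b2, hb2, hne⟩ := Finset.one_lt_card.mp h
        have hsub : {b1, b2} ⊆ c := by
          intro x hx
          rcases Finset.mem_insert.mp hx with h1 | h1
          · exact h1 ▸ (Finset.mem_inter.mp hb1).1
          · exact (Finset.mem_singleton.mp h1) ▸ (Finset.mem_inter.mp hb2).1
        have hcard2 : ({b1, b2} : Finset V).card = 2 := Finset.card_pair hne
        obtain ⟨f, hfsub, hfc, hfcard⟩ := Finset.exists_subsuperset_card_eq (n := k) hsub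
          (by omega) (by omega)
        have hfE := hcl f (Finset.mem_powerset.mpr hfc) hfcard
        rcases (hE' f).mp hfE with h1 | ⟨Y, hY, b, hb, rfl⟩
        · exact hbA b1 (Finset.mem_inter.mp hb1).2 f (hSA f h1)
            (hfsub (Finset.mem_insert_self _ _))
        · have h1 : b1 = b := by
            rcases Finset.mem_insert.mp (hfsub (Finset.mem_insert_self _ _)) with h2 | h2
            · exact h2
            · exact absurd h2 (hbA b1 (Finset.mem_inter.mp hb1).2 Y (hDA Y hY))
          have h2 : b2 = b := by
            rcases Finset.mem_insert.mp
              (hfsub (Finset.mem_insert.mpr (Or.inr (Finset.mem_singleton_self _)))) with h2 | h2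
            · exact h2
            · exact absurd h2 (hbA b2 (Finset.mem_inter.mp hb2).2 Y (hDA Y hY))
          exact hne (h1.trans h2.symm)
    obtain ⟨b, hbeq⟩ := Finset.card_eq_one.mp hcB1
    have hbc : b ∈ c := (Finset.mem_inter.mp (hbeq ▸ Finset.mem_singleton_self b)).1
    have hbB : b ∈ B := (Finset.mem_inter.mp (hbeq ▸ Finset.mem_singleton_self b)).2
    have hXA : c.erase b ⊆ A := by
      intro x hx
      obtain ⟨hxb, hxc⟩ := Finset.mem_erase.mp hx
      rcases Finset.mem_union.mp (hcAB hxc) with h1 | h1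
      · exact h1
      · exact absurd (Finset.mem_singleton.mp
          (hbeq ▸ Finset.mem_inter.mpr ⟨hxc, h1⟩)) hxb
    have hXcard : (c.erase b).card = k := by
      rw [Finset.card_erase_of_mem hbc, hccard]; omega
    have hXS : c.erase b ∈ S := hedgeA _
      (hcl _ (Finset.mem_powerset.mpr (Finset.erase_subset _ _)) hXcard) hXA
    exact ⟨c.erase b, hXS, b, hbB, (Finset.insert_erase hbc).symm⟩
  -- Part 1
  refine ⟨?_, ?_, ?_⟩
  · intro e he
    rcases (hE' e).mp he with h | ⟨Y, hY, b, hb, rfl⟩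
    · obtain ⟨b, hb⟩ := hB
      refine ⟨insert b e, ?_, Finset.subset_insert _ _, hclique e h b hb⟩
      rw [Finset.card_insert_of_notMem (hbA b hb e (hSA e h)), hScard e h]
    · obtain ⟨X, hX, hYX, hYc⟩ := (hDmem Y).mp hY
      refine ⟨insert b X, ?_, Finset.insert_subset_insert b hYX, hclique X hX b hb⟩
      rw [Finset.card_insert_of_notMem (hbA b hb X (hSA X hX)), hScard X hX]
  -- Part 2
  · have himg : ((A ∪ B).powerset.filter fun c =>
        c.card = k + 1 ∧ ∀ f ∈ c.powerset, f.card = k → f ∈ E) =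
        (S ×ˢ B).image (fun p => insert p.2 p.1) := by
      ext c
      simp only [Finset.mem_filter, Finset.mem_powerset, Finset.mem_image, Finset.mem_product]
      constructor
      · rintro ⟨hsub, hcard, hcl⟩
        obtain ⟨X, hX, b, hb, rfl⟩ := hchar c hsub hcard
          (fun f hf => hcl f (Finset.mem_powerset.mp hf))
        exact ⟨(X, b), ⟨hX, hb⟩, rfl⟩
      · rintro ⟨⟨X, b⟩, ⟨hX, hb⟩, rfl⟩
        refine ⟨?_, ?_, fun f hf hc => hclique X hX b hb f (Finset.mem_powerset.mpr hf) hc⟩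
        · exact Finset.insert_subset (Finset.mem_union_right _ hb)
            ((hSA X hX).trans Finset.subset_union_left)
        · rw [Finset.card_insert_of_notMem (hbA b hb X (hSA X hX)), hScard X hX]
    rw [himg, Finset.card_image_of_injOn, Finset.card_product]
    rintro ⟨X, b⟩ h1 ⟨X', b'⟩ h2 heq
    rw [Finset.mem_coe, Finset.mem_product] at h1 h2
    obtain ⟨hbb, hXX⟩ := hinj b h1.2 b' h2.2 X X' (hSA X h1.1) (hSA X' h2.1) heq
    simp [hbb, hXX]
  -- Part 3
  · have hET : E = S ∪ (D ×ˢ B).image (fun p => insert p.2 p.1) := by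
      ext e
      rw [hE' e, Finset.mem_union]
      simp only [Finset.mem_image, Finset.mem_product]
      constructor
      · rintro (h | ⟨Y, hY, b, hb, rfl⟩)
        · exact Or.inl h
        · exact Or.inr ⟨(Y, b), ⟨hY, hb⟩, rfl⟩
      · rintro (h | ⟨⟨Y, b⟩, ⟨hY, hb⟩, rfl⟩)
        · exact Or.inl h
        · exact Or.inr ⟨Y, hY, b, hb, rfl⟩
    have hdisj : Disjoint S ((D ×ˢ B).image (fun p => insert p.2 p.1)) := by
      rw [Finset.disjoint_left]
      intro e heS heT
      obtain ⟨⟨Y, b⟩, hmem, rfl⟩ := Finset.mem_image.mp heT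
      rw [Finset.mem_product] at hmem
      exact hbA b hmem.2 _ (hSA _ heS) (Finset.mem_insert_self b Y)
    have hTcard : ((D ×ˢ B).image (fun p => insert p.2 p.1)).card = D.card * B.card := by
      rw [Finset.card_image_of_injOn, Finset.card_product]
      rintro ⟨Y, b⟩ h1 ⟨Y', b'⟩ h2 heq
      rw [Finset.mem_coe, Finset.mem_product] at h1 h2
      obtain ⟨hbb, hYY⟩ := hinj b h1.2 b' h2.2 Y Y' (hDA Y h1.1) (hDA Y' h2.1) heq
      simp [hbb, hYY]
    have hDcard : D.card = S.card * k := by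
      rw [hDdef, Finset.card_biUnion]
      · rw [Finset.sum_congr rfl (fun X hX => ?_), Finset.sum_const, smul_eq_mul]
        rw [Finset.card_powersetCard, hScard X hX]
        have h1 : k - (k - 1) = 1 := by omega
        rw [← Nat.choose_symm (Nat.sub_le k 1), h1, Nat.choose_one_right]
      · intro X hX Y hY hne
        simp only [Function.onFun]; rw [Finset.disjoint_left]
        intro Z hZX hZY
        rw [Finset.mem_powersetCard] at hZX hZY
        have hsub : Z ⊆ X ∩ Y := Finset.subset_inter hZX.1 hZY.1
        have := (Finset.card_le_card hsub).trans (hSint X hX Y hY hne)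
        omega
    rw [hET, Finset.card_union_of_disjoint hdisj, hTcard, hDcard]
    ring
end
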